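/- arXiv:2009.03152 — 14 statements merged into one kernel-verified Lean document; each statement's English description precedes it below -/
import Mathlib

section
/- Let n ≥ 2 and let A be a nonsingular real n×n matrix each of whose nonzero entries is an odd integer. Suppose A⁻¹ = q·N for some rational number q and some n×n matrix N all of whose entries are odd integers. Then each row of A has an even number of nonzero entries, and each column of A has an even number of nonzero entries. -/
open Matrix Finset

lemma key_parity {n : ℕ} (a b : Fin n → ℤ) (P : Fin n → Prop) [DecidablePred P]
    (hb : ∀ k, Odd (b k)) (ha : ∀ k, Odd (a k) ↔ P k)
    (h : ∑ k, a k * b k = 0) : Even ((Finset.univ.filter P).card) := by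
  have h2 : ((∑ k, a k * b k : ℤ) : ZMod 2) = 0 := by rw [h]; simp
  push_cast at h2
  have key : ∀ k : Fin n, ((a k : ZMod 2)) * ((b k : ZMod 2)) = if P k then 1 else 0 := by
    intro k
    have h20 : (2 : ZMod 2) = 0 := rfl
    have hb1 : ((b k : ℤ) : ZMod 2) = 1 := by
      obtain ⟨t, ht⟩ := hb k
      rw [ht]; push_cast; rw [h20]; ring
    by_cases hp : P k
    · obtain ⟨t, ht⟩ := (ha k).mpr hp
      rw [if_pos hp, hb1, mul_one, ht]; push_cast; rw [h20]; ring
    · have he : Even (a k) := Int.not_odd_iff_even.mp (fun hh => hp ((ha k).mp hh))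
      obtain ⟨t, ht⟩ := he
      rw [if_neg hp, hb1, mul_one, ht]; push_cast
      have : (t : ZMod 2) + t = 2 * t := by ring
      rw [this, h20]; ring
  rw [Finset.sum_congr rfl (fun k _ => key k), Finset.sum_boole] at h2
  have := (ZMod.natCast_eq_zero_iff _ 2).mp h2
  exact even_iff_two_dvd.mpr this

theorem stmt0 {n : ℕ} (hn : 2 ≤ n) (A : Matrix (Fin n) (Fin n) ℝ)
    (hA : IsUnit A.det)
    (hodd : ∀ i j, A i j = 0 ∨ ∃ m : ℤ, Odd m ∧ A i j = (m : ℝ))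
    (q : ℚ) (N : Matrix (Fin n) (Fin n) ℝ)
    (hN : ∀ i j, ∃ m : ℤ, Odd m ∧ N i j = (m : ℝ))
    (hinv : A⁻¹ = (q : ℝ) • N) :
    (∀ i : Fin n, Even ((Finset.univ.filter fun j => A i j ≠ 0).card)) ∧
    (∀ j : Fin n, Even ((Finset.univ.filter fun i => A i j ≠ 0).card)) := by
  haveI : Nontrivial (Fin n) := Fin.nontrivial_iff_two_le.mpr hn
  -- integer matrices underlying A and N
  have hA' : ∀ i j, ∃ m : ℤ, A i j = (m : ℝ) ∧ (Odd m ↔ A i j ≠ 0) := by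
    intro i j
    rcases hodd i j with h0 | ⟨m, hm, he⟩
    · exact ⟨0, by simp [h0], by simp [h0, Int.odd_iff]⟩
    · refine ⟨m, he, ?_⟩
      constructor
      · intro _ hz
        rw [hz] at he
        have hm0 : m = 0 := by exact_mod_cast he.symm
        rw [hm0] at hm
        simp [Int.odd_iff] at hm
      · intro _; exact hm
  choose a haA haOdd using hA'
  choose b hbOdd hbN using hN
  -- q ≠ 0
  have hq : (q : ℝ) ≠ 0 := by
    intro h0
    have h1 : A * A⁻¹ = 1 := Matrix.mul_nonsing_inv A hA
    rw [hinv, h0, zero_smul, mul_zero] at h1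
    have := congrFun (congrFun h1 ⟨0, by omega⟩) ⟨0, by omega⟩
    simp [Matrix.one_apply] at this
  have h1 : A * A⁻¹ = 1 := Matrix.mul_nonsing_inv A hA
  have h2 : A⁻¹ * A = 1 := Matrix.nonsing_inv_mul A hA
  have hAN : A * N = (q : ℝ)⁻¹ • 1 := by
    rw [hinv, mul_smul_comm] at h1
    rw [← h1, smul_smul, inv_mul_cancel₀ hq, one_smul]
  have hNA : N * A = (q : ℝ)⁻¹ • 1 := by
    rw [hinv, smul_mul_assoc] at h2
    rw [← h2, smul_smul, inv_mul_cancel₀ hq, one_smul]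
  constructor
  · intro i
    obtain ⟨j, hj⟩ := exists_ne i
    have hent : (A * N) i j = 0 := by
      rw [hAN]; simp [Matrix.one_apply_ne' hj]
    rw [Matrix.mul_apply] at hent
    have hint : ∑ k, a i k * b k j = 0 := by
      have : ((∑ k, a i k * b k j : ℤ) : ℝ) = 0 := by
        push_cast
        rw [← hent]
        exact Finset.sum_congr rfl fun k _ => by rw [haA, hbN]
      exact_mod_cast this
    exact key_parity (a i) (fun k => b k j) _ (fun k => hbOdd k j) (fun k => haOdd i k) hint
  · intro j
    obtain ⟨i, hi⟩ := exists_ne j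
    have hent : (N * A) i j = 0 := by
      rw [hNA]; simp [Matrix.one_apply_ne (by exact hi)]
    rw [Matrix.mul_apply] at hent
    have hint : ∑ k, b i k * a k j = 0 := by
      have : ((∑ k, b i k * a k j : ℤ) : ℝ) = 0 := by
        push_cast
        rw [← hent]
        exact Finset.sum_congr rfl fun k _ => by rw [haA, hbN]
      exact_mod_cast this
    have hint' : ∑ k, a k j * b i k = 0 := by
      rw [← hint]; exact Finset.sum_congr rfl fun k _ => mul_comm _ _
    exact key_parity (fun k => a k j) (b i) _ (fun k => hbOdd i k) (fun k => haOdd k j) hint'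
end

section
/- Let n ≥ 2 and let A be a nonsingular n×n matrix with entries in {0,1} (viewed over ℝ). If A⁻¹ is equimodular (all entries of A⁻¹ have the same absolute value), then each row and each column of A has an even number of nonzero entries. -/
open Matrix Finset

lemma even_card_of_sum_pm {ι : Type*} [DecidableEq ι] (S : Finset ι) (f : ι → ℝ) (α : ℝ)
    (hα : α ≠ 0) (h : ∀ x ∈ S, f x = α ∨ f x = -α)
    (hs : ∑ x ∈ S, f x = 0) : Even S.card := by
  classical
  set T := S.filter (fun x => f x = -α) with hT
  set U := S.filter (fun x => ¬ f x = -α) with hU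
  have hsplit : ∑ x ∈ T, f x + ∑ x ∈ U, f x = ∑ x ∈ S, f x :=
    Finset.sum_filter_add_sum_filter_not S _ f
  have hTs : ∑ x ∈ T, f x = T.card * (-α) := by
    rw [Finset.sum_congr rfl (fun x hx => (Finset.mem_filter.mp hx).2),
      Finset.sum_const, nsmul_eq_mul]
  have hUs : ∑ x ∈ U, f x = U.card * α := by
    rw [Finset.sum_congr rfl (fun x hx => ?_), Finset.sum_const, nsmul_eq_mul]
    rcases Finset.mem_filter.mp hx with ⟨hxS, hxn⟩
    rcases h x hxS with h1 | h1
    · exact h1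
    · exact absurd h1 hxn
  have hcard : T.card + U.card = S.card :=
    Finset.card_filter_add_card_filter_not _
  rw [hTs, hUs, hs] at hsplit
  have heq : (T.card : ℝ) = U.card := by
    have h2 : ((U.card : ℝ) - T.card) * α = 0 := by ring_nf; linarith [hsplit]
    rcases mul_eq_zero.mp h2 with h3 | h3
    · linarith
    · exact absurd h3 hα
  have : T.card = U.card := Nat.cast_injective heq
  exact ⟨T.card, by omega⟩

theorem stmt1 {n : ℕ} (hn : 2 ≤ n) (A : Matrix (Fin n) (Fin n) ℝ)
    (hA : IsUnit A.det)
    (h01 : ∀ i j, A i j = 0 ∨ A i j = 1)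
    (hequi : ∃ α : ℝ, ∀ i j, A⁻¹ i j = α ∨ A⁻¹ i j = -α) :
    (∀ i : Fin n, Even ((Finset.univ.filter fun j => A i j ≠ 0).card)) ∧
    (∀ j : Fin n, Even ((Finset.univ.filter fun i => A i j ≠ 0).card)) := by
  obtain ⟨α, hα⟩ := hequi
  have hmul : A * A⁻¹ = 1 := Matrix.mul_nonsing_inv A hA
  have hmul' : A⁻¹ * A = 1 := Matrix.nonsing_inv_mul A hA
  haveI : Nontrivial (Fin n) := Fin.nontrivial_iff_two_le.mpr hn
  have i0 : Fin n := ⟨0, by omega⟩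
  have hαne : α ≠ 0 := by
    intro h0
    have hAinv : A⁻¹ = 0 := by
      ext i j
      rcases hα i j with h | h <;> simp [h, h0]
    have h1 : (1 : Matrix (Fin n) (Fin n) ℝ) = 0 := by rw [← hmul, hAinv, Matrix.mul_zero]
    have h2 : (1 : Matrix (Fin n) (Fin n) ℝ) i0 i0 = 0 := by rw [h1]; rfl
    rw [Matrix.one_apply_eq] at h2
    exact one_ne_zero h2
  constructor
  · intro i
    obtain ⟨k, hk⟩ := exists_ne i
    apply even_card_of_sum_pm _ (fun j => A⁻¹ j k) α hαne
    · intro j _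
      exact hα j k
    · have h0 : (A * A⁻¹) i k = 0 := by rw [hmul]; exact Matrix.one_apply_ne (Ne.symm hk)
      rw [Matrix.mul_apply] at h0
      calc ∑ j ∈ Finset.univ.filter (fun j => A i j ≠ 0), A⁻¹ j k
          = ∑ j ∈ Finset.univ.filter (fun j => A i j ≠ 0), A i j * A⁻¹ j k := by
            apply Finset.sum_congr rfl
            intro j hj
            rcases Finset.mem_filter.mp hj with ⟨_, hj2⟩
            rcases h01 i j with h | h
            · exact absurd h hj2
            · rw [h, one_mul]
        _ = ∑ j, A i j * A⁻¹ j k := by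
            apply Finset.sum_filter_of_ne
            intro j _ hne h
            exact hne (by rw [h, zero_mul])
        _ = 0 := h0
  · intro j
    obtain ⟨k, hk⟩ := exists_ne j
    apply even_card_of_sum_pm _ (fun i => A⁻¹ k i) α hαne
    · intro i _
      exact hα k i
    · have h0 : (A⁻¹ * A) k j = 0 := by rw [hmul']; exact Matrix.one_apply_ne hk
      rw [Matrix.mul_apply] at h0
      calc ∑ i ∈ Finset.univ.filter (fun i => A i j ≠ 0), A⁻¹ k i
          = ∑ i ∈ Finset.univ.filter (fun i => A i j ≠ 0), A⁻¹ k i * A i j := by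
            apply Finset.sum_congr rfl
            intro i hi
            rcases Finset.mem_filter.mp hi with ⟨_, hi2⟩
            rcases h01 i j with h | h
            · exact absurd h hi2
            · rw [h, mul_one]
        _ = ∑ i, A⁻¹ k i * A i j := by
            apply Finset.sum_filter_of_ne
            intro i _ hne h
            exact hne (by rw [h, mul_zero])
        _ = 0 := h0
end

section
/- Let n ≥ 2 and let A be a nonsingular n×n 0–1 matrix such that A⁻¹ is equimodular with A⁻¹ ∈ {−α, α}^{n×n}. Then α = 1/(2m) for some integer m. -/
/-! Write `B = A⁻¹`. Two rows of `B` with entries `±α` differ entrywise by `0` or `±2α`, so against the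
integral column `i₀` of `A` their dot products differ by `2α m` for an integer `m`. Since `B * A = 1`,
those dot products are `1` and `0` when the rows are `i₀` and some `i₁ ≠ i₀`; hence `2α m = 1`. -/

open Matrix Finset

section

variable {R : Type*} [CommRing R] {α : R}

lemma exists_int_sub_eq_two_mul_of_eq_or_eq_neg {a b : R} (ha : a = α ∨ a = -α)
    (hb : b = α ∨ b = -α) : ∃ c : ℤ, a - b = 2 * α * c := by
  rcases ha with rfl | rfl <;> rcases hb with rfl | rfl
  exacts [⟨0, by simp⟩, ⟨1, by push_cast; ring⟩, ⟨-1, by push_cast; ring⟩, ⟨0, by simp⟩]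

lemma exists_int_dotProduct_sub_dotProduct_eq_two_mul {ι : Type*} [Fintype ι] {u v w : ι → R}
    (hu : ∀ k, u k = α ∨ u k = -α) (hv : ∀ k, v k = α ∨ v k = -α) (hw : ∀ k, ∃ z : ℤ, w k = z) :
    ∃ m : ℤ, u ⬝ᵥ w - v ⬝ᵥ w = 2 * α * m := by
  choose c hc using fun k => exists_int_sub_eq_two_mul_of_eq_or_eq_neg (hu k) (hv k)
  choose z hz using hw
  refine ⟨∑ k, c k * z k, ?_⟩
  simp only [dotProduct, ← sum_sub_distrib, ← sub_mul, hc, hz, Int.cast_sum, Int.cast_mul, mul_sum]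
  exact sum_congr rfl fun k _ => by ring

end

lemma exists_int_eq_one_div_two_mul_of_mul_eq_one {ι K : Type*} [Fintype ι] [DecidableEq ι]
    [Field K] {B A : Matrix ι ι K} (hBA : B * A = 1) {α : K}
    (hB : ∀ i j, B i j = α ∨ B i j = -α) (hA : ∀ i j, ∃ z : ℤ, A i j = z) {i₀ i₁ : ι}
    (hi : i₀ ≠ i₁) : ∃ m : ℤ, α = 1 / (2 * (m : K)) := by
  obtain ⟨m, hm⟩ := exists_int_dotProduct_sub_dotProduct_eq_two_mul (hB i₀) (hB i₁) (hA · i₀)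
  have hdiag : B i₀ ⬝ᵥ (fun k => A k i₀) = 1 := by
    simpa [mul_apply, dotProduct] using congrFun (congrFun hBA i₀) i₀
  have hoff : B i₁ ⬝ᵥ (fun k => A k i₀) = 0 := by
    simpa [mul_apply, dotProduct, one_apply_ne hi.symm] using congrFun (congrFun hBA i₁) i₀
  rw [hdiag, hoff, sub_zero, mul_right_comm] at hm
  exact ⟨m, eq_one_div_of_mul_eq_one_right hm.symm⟩

theorem stmt2 {n : ℕ} (hn : 2 ≤ n) (A : Matrix (Fin n) (Fin n) ℝ)
    (hA : IsUnit A.det)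
    (h01 : ∀ i j, A i j = 0 ∨ A i j = 1)
    (α : ℝ) (hequi : ∀ i j, A⁻¹ i j = α ∨ A⁻¹ i j = -α) :
    ∃ m : ℤ, α = 1 / (2 * (m : ℝ)) := by
  have hint : ∀ i j, ∃ z : ℤ, A i j = z := fun i j => by
    rcases h01 i j with h | h
    exacts [⟨0, by simp [h]⟩, ⟨1, by simp [h]⟩]
  have hne : (⟨0, by omega⟩ : Fin n) ≠ ⟨1, by omega⟩ := by simp
  exact exists_int_eq_one_div_two_mul_of_mul_eq_one (nonsing_inv_mul A hA) hequi hint hne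
end

section
/- Let n ≥ 2 and let A be a nonsingular n×n 0–1 matrix with A⁻¹ ∈ {−α,α}^{n×n}, and suppose |det(A)| = 2^k for some integer k > 0. Then there exists an integer t with 0 ≤ t < k such that every minor of A of order n−1 has absolute value 2^t, and moreover |α| = 1/2^{k−t}. -/
/-!
Since `adj A = det A • A⁻¹`, every entry of the adjugate, i.e. every signed minor of order
`n - 1`, has absolute value `μ = 2 ^ k * |α|`. These minors are integers, and expanding `det A`
along a row shows that `μ` divides `det A = ± 2 ^ k`, so `μ = 2 ^ t` with `t ≤ k`. If `t = k`,
then `det A` divides every entry of `adj A`, so `A⁻¹ = adj A / det A` is an integer matrix and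
`det A` is a unit of `ℤ`, which contradicts `k > 0`.
-/

open Matrix Finset

namespace Matrix

variable {ι : Type*} [Fintype ι] [DecidableEq ι]

theorem adjugate_eq_det_smul_inv {K : Type*} [Field K] {A : Matrix ι ι K} (hA : IsUnit A.det) :
    adjugate A = A.det • A⁻¹ := by
  calc adjugate A = A⁻¹ * (A * adjugate A) := by
        rw [← Matrix.mul_assoc, nonsing_inv_mul A hA, Matrix.one_mul]
    _ = A.det • A⁻¹ := by rw [mul_adjugate, Matrix.mul_smul, Matrix.mul_one]

theorem abs_adjugate_apply_of_inv_apply_eq_or_eq_neg {K : Type*} [Field K] [LinearOrder K]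
    [IsStrictOrderedRing K] {A : Matrix ι ι K} (hA : IsUnit A.det) {α : K}
    (hinv : ∀ i j, A⁻¹ i j = α ∨ A⁻¹ i j = -α)
    (i j : ι) : |adjugate A i j| = |A.det| * |α| := by
  rw [adjugate_eq_det_smul_inv hA, smul_apply, smul_eq_mul, abs_mul]
  rcases hinv i j with h | h <;> simp [h]

theorem dvd_det_of_forall_dvd_adjugate {R : Type*} [CommRing R] {B : Matrix ι ι R} {d : R}
    (i : ι) (h : ∀ j, d ∣ adjugate B j i) : d ∣ B.det := by
  have hii := congr_fun₂ (mul_adjugate B) i i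
  simp only [mul_apply, smul_apply, one_apply_eq, smul_eq_mul, mul_one] at hii
  exact hii ▸ dvd_sum fun j _ => dvd_mul_of_dvd_right (h j) _

theorem isUnit_det_of_det_dvd_adjugate {R : Type*} [CommRing R] [IsDomain R] {B : Matrix ι ι R}
    (hB : B.det ≠ 0) (h : ∀ i j, B.det ∣ adjugate B i j) : IsUnit B.det := by
  choose C hC using h
  have hBC : B * of C = 1 :=
    smul_right_injective _ hB <| show B.det • (B * of C) = B.det • 1 by
    rw [← Matrix.mul_smul, ← mul_adjugate B, ← ext fun i j => (hC i j).symm]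
    rfl
  exact IsUnit.of_mul_eq_one _ (by rw [← det_mul, hBC, det_one])

theorem exists_lt_and_eq_pow_of_abs_adjugate_eq [Nonempty ι] {B : Matrix ι ι ℤ} {p k : ℕ}
    (hp : p.Prime) (hk : 0 < k) (hdet : |B.det| = (p : ℤ) ^ k) {m : ℤ}
    (hadj : ∀ i j, |adjugate B i j| = m) : ∃ t < k, m = (p : ℤ) ^ t := by
  obtain ⟨i⟩ := ‹Nonempty ι›
  have hm : m ∣ (p : ℤ) ^ k := hdet ▸
    (dvd_det_of_forall_dvd_adjugate i fun j => hadj j i ▸ abs_dvd_self _).trans (self_dvd_abs _)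
  obtain ⟨t, htk, hmt⟩ := (Nat.dvd_prime_pow hp).mp (Int.natAbs_dvd_natAbs.mpr hm)
  have hmt : m = (p : ℤ) ^ t := by
    rw [← abs_of_nonneg (hadj i i ▸ abs_nonneg _ : 0 ≤ m), Int.abs_eq_natAbs, hmt]
    push_cast
    rfl
  refine ⟨t, htk.lt_of_ne fun htk => ?_, hmt⟩
  have hB : B.det ≠ 0 := abs_pos.mp (hdet ▸ pow_pos (by exact_mod_cast hp.pos) k)
  have hunit := isUnit_det_of_det_dvd_adjugate hB fun i j =>
    (abs_dvd_abs _ _).mp (by rw [hadj, hdet, hmt, htk])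
  rw [Int.isUnit_iff_abs_eq, hdet] at hunit
  exact absurd hunit (by exact_mod_cast (Nat.one_lt_pow hk.ne' hp.one_lt).ne')

theorem det_map_intCast {R : Type*} [CommRing R] (B : Matrix ι ι ℤ) :
    (B.map ((↑) : ℤ → R)).det = B.det :=
  ((Int.castRingHom R).map_det B).symm

theorem adjugate_map_intCast {R : Type*} [CommRing R] (B : Matrix ι ι ℤ) :
    adjugate (B.map ((↑) : ℤ → R)) = (adjugate B).map (↑) :=
  ((Int.castRingHom R).map_adjugate B).symm

end Matrix

theorem stmt5_general {n : ℕ} (A : Matrix (Fin (n + 1)) (Fin (n + 1)) ℝ)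
    (hA : IsUnit A.det)
    (h01 : ∀ i j, A i j = 0 ∨ A i j = 1)
    (α : ℝ) (hequi : ∀ i j, A⁻¹ i j = α ∨ A⁻¹ i j = -α)
    (k : ℕ) (hk : 0 < k) (hdet : |A.det| = 2 ^ k) :
    ∃ t : ℕ, t < k ∧
      (∀ i j : Fin (n + 1), |(A.submatrix i.succAbove j.succAbove).det| = 2 ^ t) ∧
      |α| = 1 / 2 ^ (k - t) := by
  obtain ⟨B, rfl⟩ : ∃ B : Matrix _ _ ℤ, B.map (↑) = A :=
    ⟨of fun i j => if A i j = 0 then 0 else 1,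
      ext fun i j => by rcases h01 i j with h | h <;> simp [h]⟩
  rw [det_map_intCast] at hdet
  have hadj (i j) : |((adjugate B i j : ℤ) : ℝ)| = 2 ^ k * |α| := by
    rw [← hdet, ← det_map_intCast,
      ← abs_adjugate_apply_of_inv_apply_eq_or_eq_neg hA hequi i j, adjugate_map_intCast,
      map_apply]
  obtain ⟨t, htk, ht⟩ := exists_lt_and_eq_pow_of_abs_adjugate_eq Nat.prime_two hk
    (m := |adjugate B 0 0|) (by exact_mod_cast hdet)
    fun i j => by exact_mod_cast (hadj i j).trans (hadj 0 0).symm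
  have hμ : 2 ^ k * |α| = 2 ^ t := by
    rw [← hadj 0 0]
    exact_mod_cast ht
  refine ⟨t, htk, fun i j => ?_, ?_⟩
  · rw [← hμ, ← hadj j i, ← map_apply (f := ((↑) : ℤ → ℝ)),
      ← adjugate_map_intCast, adjugate_fin_succ_eq_det_submatrix, abs_mul]
    simp
  · rw [← Nat.add_sub_cancel' htk.le, pow_add, mul_assoc] at hμ
    rw [eq_div_iff (by positivity), mul_comm]
    exact mul_left_cancel₀ (by positivity) (hμ.trans (mul_one _).symm)

theorem stmt5 {n : ℕ} (hn : 1 ≤ n) (A : Matrix (Fin (n + 1)) (Fin (n + 1)) ℝ)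
    (hA : IsUnit A.det)
    (h01 : ∀ i j, A i j = 0 ∨ A i j = 1)
    (α : ℝ) (hequi : ∀ i j, A⁻¹ i j = α ∨ A⁻¹ i j = -α)
    (k : ℕ) (hk : 0 < k) (hdet : |A.det| = 2 ^ k) :
    ∃ t : ℕ, t < k ∧
      (∀ i j : Fin (n + 1), |(A.submatrix i.succAbove j.succAbove).det| = 2 ^ t) ∧
      |α| = 1 / 2 ^ (k - t) :=
  stmt5_general A hA h01 α hequi k hk hdet
end

section
/- Let n ≥ 2, let A be a nonsingular n×n 0–1 matrix with A⁻¹ ∈ {−α,α}^{n×n} and |det(A)| = 2^k for some integer k > 0. If A has a minor of order n−1 that is an odd integer, then every minor of A of order n−1 has absolute value 1 and |α| = 1/|det(A)|. -/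
open Matrix Finset

/-! Since `A⁻¹ = adj A / det A`, every minor of order `n - 1` has absolute value `|α| |det A|`.
The minors are integers, so expanding `det A` along the row of the odd minor `m` gives
`m ∣ det A = ± 2 ^ k`, whence `|m| = 1`. -/

theorem Matrix.abs_det_submatrix_succAbove_eq {K : Type*} [Field K] [LinearOrder K]
    [IsStrictOrderedRing K] {n : ℕ} {A : Matrix (Fin (n + 1)) (Fin (n + 1)) K} (hA : A.det ≠ 0)
    (i j : Fin (n + 1)) :
    |(A.submatrix i.succAbove j.succAbove).det| = |A.det| * |A⁻¹ j i| := by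
  rw [inv_def, smul_apply, adjugate_fin_succ_eq_det_submatrix, Ring.inverse_eq_inv', smul_eq_mul,
    abs_mul, abs_mul, abs_pow, abs_neg, abs_one, one_pow, one_mul, abs_inv,
    mul_inv_cancel_left₀ (abs_ne_zero.mpr hA)]

theorem Matrix.dvd_det_of_forall_dvd_det_submatrix_succAbove {R : Type*} [CommRing R] {n : ℕ}
    (B : Matrix (Fin (n + 1)) (Fin (n + 1)) R) (i : Fin (n + 1)) {m : R}
    (h : ∀ j : Fin (n + 1), m ∣ (B.submatrix i.succAbove j.succAbove).det) : m ∣ B.det := by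
  rw [det_succ_row B i]
  exact dvd_sum fun j _ => (h j).mul_left _

theorem Int.abs_eq_one_of_odd_of_dvd_two_pow {m : ℤ} {k : ℕ} (hm : Odd m) (h : m ∣ 2 ^ k) :
    |m| = 1 := by
  have hcop : IsCoprime m (2 ^ k) := (Int.isCoprime_two_right.mpr hm).pow_right
  exact Int.isUnit_iff_abs_eq.mp (hcop.isUnit_of_dvd' dvd_rfl h)

theorem Matrix.abs_det_submatrix_succAbove_eq_one_of_odd {n k : ℕ}
    (B : Matrix (Fin (n + 1)) (Fin (n + 1)) ℤ) (hdet : |B.det| = 2 ^ k) {i j : Fin (n + 1)}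
    (hodd : Odd (B.submatrix i.succAbove j.succAbove).det)
    (hrow : ∀ j' : Fin (n + 1), |(B.submatrix i.succAbove j'.succAbove).det| =
      |(B.submatrix i.succAbove j.succAbove).det|) :
    |(B.submatrix i.succAbove j.succAbove).det| = 1 := by
  refine Int.abs_eq_one_of_odd_of_dvd_two_pow (k := k) hodd ?_
  rw [← hdet, dvd_abs]
  exact B.dvd_det_of_forall_dvd_det_submatrix_succAbove i fun j' =>
    (abs_dvd_abs _ _).mp (hrow j').symm.dvd

theorem stmt6_general {n : ℕ} (A : Matrix (Fin (n + 1)) (Fin (n + 1)) ℝ)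
    (h01 : ∀ i j, A i j = 0 ∨ A i j = 1)
    (α : ℝ) (hequi : ∀ i j, A⁻¹ i j = α ∨ A⁻¹ i j = -α)
    (k : ℕ) (hdet : |A.det| = 2 ^ k)
    (hoddminor : ∃ (i j : Fin (n + 1)) (m : ℤ), Odd m ∧
      (A.submatrix i.succAbove j.succAbove).det = (m : ℝ)) :
    (∀ i j : Fin (n + 1), |(A.submatrix i.succAbove j.succAbove).det| = 1) ∧
    |α| = 1 / |A.det| := by
  obtain ⟨i₀, j₀, m, hm_odd, hm⟩ := hoddminor
  have hA : A.det ≠ 0 := by rw [← abs_ne_zero, hdet]; positivity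
  have hminor : ∀ i j : Fin (n + 1),
      |(A.submatrix i.succAbove j.succAbove).det| = |A.det| * |α| := by
    intro i j
    rw [abs_det_submatrix_succAbove_eq hA]
    rcases hequi j i with h | h <;> simp [h]
  obtain ⟨B, hAB⟩ : ∃ B : Matrix (Fin (n + 1)) (Fin (n + 1)) ℤ, A = B.map (↑) :=
    ⟨of fun i j => if A i j = 0 then 0 else 1, by
      ext i j; rcases h01 i j with h | h <;> simp [h]⟩
  have hcast : ∀ i j : Fin (n + 1),
      (A.submatrix i.succAbove j.succAbove).det =
        ((B.submatrix i.succAbove j.succAbove).det : ℝ) := by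
    intro i j
    rw [hAB, Int.cast_det, submatrix_map]
  have hBdet : |B.det| = 2 ^ k := by
    have h := hdet
    rw [hAB, ← Int.cast_det] at h
    exact_mod_cast h
  have hone : |(B.submatrix i₀.succAbove j₀.succAbove).det| = 1 := by
    refine B.abs_det_submatrix_succAbove_eq_one_of_odd hBdet ?_ fun j => ?_
    · have h : (B.submatrix i₀.succAbove j₀.succAbove).det = m := by
        exact_mod_cast (hcast i₀ j₀).symm.trans hm
      exact h ▸ hm_odd
    · have h := (hminor i₀ j).trans (hminor i₀ j₀).symm
      rw [hcast, hcast] at h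
      exact_mod_cast h
  have hscale : |A.det| * |α| = 1 := by
    rw [← hminor i₀ j₀, hcast]
    exact_mod_cast hone
  exact ⟨fun i j => (hminor i j).trans hscale, eq_one_div_of_mul_eq_one_right hscale⟩

theorem stmt6 {n : ℕ} (hn : 1 ≤ n) (A : Matrix (Fin (n + 1)) (Fin (n + 1)) ℝ)
    (hA : IsUnit A.det)
    (h01 : ∀ i j, A i j = 0 ∨ A i j = 1)
    (α : ℝ) (hequi : ∀ i j, A⁻¹ i j = α ∨ A⁻¹ i j = -α)
    (k : ℕ) (hk : 0 < k) (hdet : |A.det| = 2 ^ k)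
    (hoddminor : ∃ (i j : Fin (n + 1)) (m : ℤ), Odd m ∧
      (A.submatrix i.succAbove j.succAbove).det = (m : ℝ)) :
    (∀ i j : Fin (n + 1), |(A.submatrix i.succAbove j.succAbove).det| = 1) ∧
    |α| = 1 / |A.det| :=
  stmt6_general A h01 α hequi k hdet hoddminor
end

section
/- Let n ≥ 3 and let A be a nonsingular n×n 0–1 matrix with columns a₁,…,aₙ and rows r₁,…,rₙ. If A⁻¹ is equimodular, then for all i, j, the vector aᵢ − aⱼ has an even number of nonzero entries, and the vector rᵢ − rⱼ has an even number of nonzero entries. -/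
/-!
Write `B = A⁻¹`, whose entries are `±α` with `α ≠ 0`. Given columns `i, j`, pick `r ∉ {i, j}`,
possible as `n ≥ 3`. Row `r` of `B` is orthogonal to both `aᵢ` and `aⱼ`, so
`∑ₖ B r k * (A k i - A k j) = 0`. Each term is `0` or `±α`, and nonzero exactly on the support of
`aᵢ - aⱼ`; a vanishing sum of `±α`'s has as many `+α` as `-α` terms, hence evenly many terms.
Rows follow by applying this to `Aᵀ`, whose inverse is `(A⁻¹)ᵀ`.
-/

open Matrix Finset

section

variable {ι K : Type*} [Fintype ι] [Field K] [CharZero K] [DecidableEq K]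

lemma even_card_filter_ne_zero_of_sum_eq_zero {α : K} (hα : α ≠ 0) {s : ι → K}
    (hs : ∀ k, s k = α ∨ s k = -α ∨ s k = 0) (hsum : ∑ k, s k = 0) : Even #{k | s k ≠ 0} := by
  classical
  set P : Finset ι := {k | s k = α}
  set Q : Finset ι := {k | s k = -α}
  have hneg : α ≠ -α := fun h => hα (by linear_combination h / 2)
  have hsplit : ({k | s k ≠ 0} : Finset ι) = P ∪ Q := by
    ext k
    rcases hs k with h | h | h <;> simp [P, Q, h, hα, hneg, eq_comm (a := (0 : K))]
  have hdisj : Disjoint P Q := disjoint_filter.2 fun k _ h => h ▸ hneg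
  have hcount : (#P : K) * α = #Q * α := by
    rw [← sub_eq_zero, ← hsum, ← sum_filter_ne_zero, hsplit, sum_union hdisj,
      sum_congr rfl fun k hk => (mem_filter.1 hk).2, sum_congr rfl fun k hk => (mem_filter.1 hk).2]
    simp only [sum_const, nsmul_eq_mul]
    ring
  have hPQ : #P = #Q := by exact_mod_cast mul_right_cancel₀ hα hcount
  rw [hsplit, card_union_of_disjoint hdisj, hPQ]
  exact Even.add_self _

lemma even_card_filter_sub_ne_zero_of_dotProduct_eq_zero {α : K} (hα : α ≠ 0) {b x y : ι → K}
    (hb : ∀ k, b k = α ∨ b k = -α) (hx : ∀ k, x k = 0 ∨ x k = 1) (hy : ∀ k, y k = 0 ∨ y k = 1)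
    (h : b ⬝ᵥ (x - y) = 0) : Even #{k | x k - y k ≠ 0} := by
  have hb0 : ∀ k, b k ≠ 0 := fun k => by rcases hb k with h | h <;> simp [h, hα]
  convert even_card_filter_ne_zero_of_sum_eq_zero hα (s := fun k => b k * (x k - y k)) ?_ h
    using 3 with k
  · simp [hb0 k]
  · intro k
    rcases hb k with hb | hb <;> rcases hx k with hx | hx <;> rcases hy k with hy | hy <;>
      simp [hb, hx, hy]

lemma even_card_filter_col_sub_ne_zero [DecidableEq ι] {A : Matrix ι ι K} (hA : IsUnit A.det)
    (h01 : ∀ i j, A i j = 0 ∨ A i j = 1) {α : K} (hequi : ∀ i j, A⁻¹ i j = α ∨ A⁻¹ i j = -α)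
    {i j r : ι} (hri : r ≠ i) (hrj : r ≠ j) : Even #{k | A k i - A k j ≠ 0} := by
  have hinv : A⁻¹ * A = 1 := nonsing_inv_mul A hA
  have hα : α ≠ 0 := by
    rintro rfl
    have hrow : A⁻¹ r = 0 := funext fun k => by simpa using hequi r k
    simpa [mul_apply', hrow] using congr_fun₂ hinv r r
  refine even_card_filter_sub_ne_zero_of_dotProduct_eq_zero hα (hequi r) (h01 · i) (h01 · j) ?_
  rw [dotProduct_sub]
  simp only [← mul_apply', hinv, one_apply_ne hri, one_apply_ne hrj, sub_zero]

end

theorem stmt8 {n : ℕ} (hn : 3 ≤ n) (A : Matrix (Fin n) (Fin n) ℝ)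
    (hA : IsUnit A.det)
    (h01 : ∀ i j, A i j = 0 ∨ A i j = 1)
    (hequi : ∃ α : ℝ, ∀ i j, A⁻¹ i j = α ∨ A⁻¹ i j = -α) :
    ∀ i j : Fin n,
      Even ((Finset.univ.filter fun r => A r i - A r j ≠ 0).card) ∧
      Even ((Finset.univ.filter fun c => A i c - A j c ≠ 0).card) := by
  obtain ⟨α, hequi⟩ := hequi
  intro i j
  obtain ⟨r, hri, hrj⟩ := Fin.exists_ne_and_ne_of_two_lt i j (by omega)
  have hequi_transpose : ∀ i j, Aᵀ⁻¹ i j = α ∨ Aᵀ⁻¹ i j = -α := fun i j => by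
    simpa [← transpose_nonsing_inv] using hequi j i
  exact ⟨even_card_filter_col_sub_ne_zero hA h01 hequi hri hrj,
    even_card_filter_col_sub_ne_zero (A := Aᵀ) (by rwa [det_transpose]) (fun i j => h01 j i)
      hequi_transpose hri hrj⟩
end

section
/- Let n ≥ 2 and let A be a symmetric nonsingular n×n 0–1 matrix such that A⁻¹ is equimodular. Then A has an even number of nonzero diagonal entries. -/
open Matrix Finset

lemma keyEven {ι : Type*} [DecidableEq ι] (α : ℝ) (hα : α ≠ 0) (s : Finset ι) (f : ι → ℝ)
    (hf : ∀ k ∈ s, f k = α ∨ f k = -α) (hsum : ∑ k ∈ s, f k = 0) :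
    Even s.card := by
  classical
  have hcard : (s.filter (fun k => f k = α)).card
      + (s.filter (fun k => ¬ f k = α)).card = s.card :=
    Finset.card_filter_add_card_filter_not _
  have hm : ∀ k ∈ s.filter (fun k => ¬ f k = α), f k = -α := by
    intro k hk
    rcases hf k (Finset.mem_filter.mp hk).1 with h | h
    · exact absurd h (Finset.mem_filter.mp hk).2
    · exact h
  have hsplit : ∑ k ∈ s, f k
      = (s.filter (fun k => f k = α)).card * α
        + (s.filter (fun k => ¬ f k = α)).card * (-α) := by
    rw [← Finset.sum_filter_add_sum_filter_not s (fun k => f k = α)]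
    congr 1
    · rw [Finset.sum_congr rfl (fun k hk => (Finset.mem_filter.mp hk).2)]
      simp [mul_comm]
    · rw [Finset.sum_congr rfl hm]
      simp [mul_comm]
  have hcards : ((s.filter (fun k => f k = α)).card : ℝ)
      = (s.filter (fun k => ¬ f k = α)).card := by
    rw [hsplit] at hsum
    have h2 : (((s.filter (fun k => f k = α)).card : ℝ)
        - (s.filter (fun k => ¬ f k = α)).card) * α = 0 := by ring_nf; linarith
    rcases mul_eq_zero.mp h2 with h | h
    · linarith
    · exact absurd h hα
  have hc : (s.filter (fun k => f k = α)).card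
      = (s.filter (fun k => ¬ f k = α)).card := by exact_mod_cast hcards
  rw [← hcard, hc]
  exact Even.add_self _

theorem stmt10 {n : ℕ} (hn : 2 ≤ n) (A : Matrix (Fin n) (Fin n) ℝ)
    (hsym : A.IsSymm) (hA : IsUnit A.det)
    (h01 : ∀ i j, A i j = 0 ∨ A i j = 1)
    (hequi : ∃ α : ℝ, ∀ i j, A⁻¹ i j = α ∨ A⁻¹ i j = -α) :
    Even ((Finset.univ.filter fun i => A i i ≠ 0).card) := by
  classical
  obtain ⟨α, hα⟩ := hequi
  have hAB : A * A⁻¹ = 1 := Matrix.mul_nonsing_inv A hA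
  have hα0 : α ≠ 0 := by
    intro h0
    have hz : A⁻¹ = 0 := by
      ext i j; rcases hα i j with h | h <;> simp [h, h0]
    rw [hz, mul_zero] at hAB
    have := congrFun (congrFun hAB ⟨0, by omega⟩) ⟨0, by omega⟩
    simp [Matrix.one_apply] at this
  have hrow : ∀ i : Fin n, Even ((univ.filter fun k => A i k ≠ 0).card) := by
    intro i
    obtain ⟨j, hj⟩ : ∃ j : Fin n, j ≠ i := by
      have h1 : 1 < Fintype.card (Fin n) := by simpa using by omega
      exact Fintype.exists_ne_of_one_lt_card h1 i
    have hentry : ∑ k, A i k * A⁻¹ k j = 0 := by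
      have h := congrFun (congrFun hAB i) j
      have hij : i ≠ j := fun h' => hj h'.symm
      simpa [Matrix.mul_apply, Matrix.one_apply, hij] using h
    have hsum : ∑ k ∈ univ.filter (fun k => A i k ≠ 0), A⁻¹ k j = 0 := by
      calc ∑ k ∈ univ.filter (fun k => A i k ≠ 0), A⁻¹ k j
          = ∑ k, A i k * A⁻¹ k j := by
            rw [Finset.sum_filter]
            apply Finset.sum_congr rfl
            intro k _
            rcases h01 i k with h | h <;> simp [h]
        _ = 0 := hentry
    exact keyEven α hα0 _ _ (fun k _ => hα k j) hsum
  -- pass to ZMod 2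
  set c : Fin n → Fin n → ZMod 2 := fun i j => if A i j ≠ 0 then 1 else 0 with hc
  have hrowz : ∀ i : Fin n, ∑ j, c i j = 0 := by
    intro i
    have h1 : ∑ j, c i j = ((univ.filter fun k => A i k ≠ 0).card : ZMod 2) := by
      simp only [hc]
      rw [Finset.sum_boole]
    rw [h1]
    obtain ⟨m, hm⟩ := hrow i
    rw [hm, Nat.cast_add]
    exact CharTwo.add_self_eq_zero _
  have htot : ∑ p ∈ Finset.univ ×ˢ Finset.univ, c p.1 p.2 = 0 := by
    rw [Finset.sum_product]
    simp [hrowz]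
  have hsymm : ∀ i j, c i j = c j i := by
    intro i j
    have h' : A i j = A j i := by
      have := congrFun (congrFun hsym j) i
      simpa [Matrix.transpose_apply] using this
    simp [hc, h']
  have hoff : ∑ p ∈ (Finset.univ ×ˢ Finset.univ).filter
      (fun p : Fin n × Fin n => p.1 ≠ p.2), c p.1 p.2 = 0 := by
    apply Finset.sum_involution (fun p _ => p.swap)
    · intro p hp
      simp only [Prod.fst_swap, Prod.snd_swap]
      rw [hsymm p.2 p.1]
      exact CharTwo.add_self_eq_zero _
    · intro p hp _
      have h12 : p.1 ≠ p.2 := (Finset.mem_filter.mp hp).2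
      intro hswap
      apply h12
      have h3 := congrArg Prod.fst hswap
      simpa using h3.symm
    · intro p hp
      simp
    · intro p hp
      simp only [Finset.mem_filter, Finset.mem_product, Finset.mem_univ,
        true_and, Prod.fst_swap, Prod.snd_swap] at hp ⊢
      exact fun h => hp (Eq.symm h)
  have hdiag : ∑ p ∈ (Finset.univ ×ˢ Finset.univ).filter
      (fun p : Fin n × Fin n => p.1 = p.2), c p.1 p.2
      = ∑ i : Fin n, c i i := by
    refine Finset.sum_nbij' (fun p => p.1) (fun i => (i, i)) ?_ ?_ ?_ ?_ ?_
    · intro p hp; exact Finset.mem_univ _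
    · intro i _; simp
    · intro p hp
      have h2 : p.1 = p.2 := (Finset.mem_filter.mp hp).2
      exact Prod.ext rfl h2
    · intro i _; rfl
    · intro p hp
      have h2 : p.1 = p.2 := (Finset.mem_filter.mp hp).2
      rw [← h2]
  have hsplit := Finset.sum_filter_add_sum_filter_not (Finset.univ ×ˢ Finset.univ)
    (fun p : Fin n × Fin n => p.1 = p.2) (fun p => c p.1 p.2)
  rw [htot, hdiag, hoff, add_zero] at hsplit
  have hcast : (((Finset.univ.filter fun i => A i i ≠ 0).card : ℕ) : ZMod 2) = 0 := by
    rw [← Finset.sum_boole]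
    simpa [hc] using hsplit
  exact even_iff_two_dvd.mpr ((ZMod.natCast_eq_zero_iff _ 2).mp hcast)
end

section
/- Let n ≥ 3 and let A be a symmetric nonsingular n×n 0–1 matrix with columns a₁,…,aₙ such that A⁻¹ is equimodular. Then for every k ∈ [n], the matrix A − aₖaₖᵀ has an even number of nonzero diagonal entries. -/
open Matrix Finset

lemma even_card_of_pm_sum {ι : Type*} [DecidableEq ι] {S : Finset ι} {t : ι → ℝ} {α : ℝ}
    (hα : α ≠ 0) (h : ∀ j ∈ S, t j = α ∨ t j = -α)
    (hsum : ∑ j ∈ S, t j = 0) : Even S.card := by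
  classical
  have hsplit := Finset.sum_filter_add_sum_filter_not S (fun j => t j = α) t
  rw [hsum] at hsplit
  have hPsum : ∑ j ∈ S.filter (fun j => t j = α), t j
      = ((S.filter (fun j => t j = α)).card : ℝ) * α := by
    rw [Finset.sum_congr rfl (fun j hj => (Finset.mem_filter.mp hj).2)]
    simp [mul_comm]
  have hN : ∀ j ∈ S.filter (fun j => ¬ t j = α), t j = -α := by
    intro j hj
    have hj' := Finset.mem_filter.mp hj
    rcases h j hj'.1 with h1 | h1
    · exact absurd h1 hj'.2
    · exact h1
  have hNsum : ∑ j ∈ S.filter (fun j => ¬ t j = α), t j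
      = ((S.filter (fun j => ¬ t j = α)).card : ℝ) * (-α) := by
    rw [Finset.sum_congr rfl hN]
    simp [mul_comm]
  rw [hPsum, hNsum] at hsplit
  have hcards : ((S.filter (fun j => t j = α)).card : ℝ)
      = ((S.filter (fun j => ¬ t j = α)).card : ℝ) := by
    have hmul : (((S.filter (fun j => t j = α)).card : ℝ)
        - ((S.filter (fun j => ¬ t j = α)).card : ℝ)) * α = 0 := by ring_nf; linarith
    rcases mul_eq_zero.mp hmul with h' | h'
    · linarith
    · exact absurd h' hα
  have hceq : (S.filter (fun j => t j = α)).card = (S.filter (fun j => ¬ t j = α)).card :=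
    Nat.cast_injective hcards
  have htot := Finset.card_filter_add_card_filter_not (s := S) (p := fun j => t j = α)
  exact ⟨(S.filter (fun j => t j = α)).card, by omega⟩

theorem stmt12 {n : ℕ} (hn : 3 ≤ n) (A : Matrix (Fin n) (Fin n) ℝ)
    (hsym : A.IsSymm) (hA : IsUnit A.det)
    (h01 : ∀ i j, A i j = 0 ∨ A i j = 1)
    (hequi : ∃ α : ℝ, ∀ i j, A⁻¹ i j = α ∨ A⁻¹ i j = -α) :
    ∀ k : Fin n,
      Even ((Finset.univ.filter fun i =>
        (A - Matrix.of fun r c => A r k * A c k) i i ≠ 0).card) := by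
  classical
  intro k
  obtain ⟨α, hα⟩ := hequi
  have hinv : A * A⁻¹ = 1 := Matrix.mul_nonsing_inv A hA
  have hαne : α ≠ 0 := by
    rintro rfl
    have hz : A⁻¹ = 0 := by
      ext i j; rcases hα i j with h | h <;> simpa using h
    rw [hz, Matrix.mul_zero] at hinv
    have := congrFun (congrFun hinv ⟨0, by omega⟩) ⟨0, by omega⟩
    simp [Matrix.one_apply] at this
  -- row sums even
  have rowEven : ∀ i, Even ((Finset.univ.filter fun j => A i j = 1).card) := by
    intro i
    obtain ⟨k', hk'⟩ := Fintype.exists_ne_of_one_lt_card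
      (by simp; omega : 1 < Fintype.card (Fin n)) i
    have heq : ∑ j, A i j * A⁻¹ j k' = 0 := by
      have h1 := congrFun (congrFun hinv i) k'
      rw [Matrix.mul_apply] at h1
      rwa [Matrix.one_apply_ne (Ne.symm hk')] at h1
    have heq2 : ∑ j ∈ Finset.univ.filter (fun j => A i j = 1), A⁻¹ j k' = 0 := by
      rw [← heq]
      rw [← Finset.sum_filter_of_ne (p := fun j => A i j = 1)
        (f := fun j => A i j * A⁻¹ j k') (fun x _ hx => by
          rcases h01 i x with h | h
          · simp [h] at hx
          · exact h)]
      exact Finset.sum_congr rfl (fun j hj => by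
        rw [(Finset.mem_filter.mp hj).2, one_mul])
    exact even_card_of_pm_sum hαne (fun j _ => hα j k') heq2
  have hAsymm : ∀ i j, A i j = A j i := fun i j => (hsym.apply i j).symm
  -- move to ZMod 2
  set g : Fin n → Fin n → ZMod 2 := fun i j => if A i j = 1 then 1 else 0 with hg
  have evenCast : ∀ m : ℕ, Even m → (m : ZMod 2) = 0 := fun m hm =>
    (ZMod.natCast_eq_zero_iff m 2).mpr (even_iff_two_dvd.mp hm)
  have hrow0 : ∀ i, ∑ j, g i j = 0 := by
    intro i
    rw [hg]
    rw [Finset.sum_boole]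
    exact evenCast _ (rowEven i)
  have hsymm_g : ∀ i j, g i j = g j i := by
    intro i j; simp only [hg]; rw [hAsymm i j]
  -- total double sum is zero
  have htot : ∑ p ∈ Finset.univ ×ˢ Finset.univ, g p.1 p.2 = 0 := by
    rw [Finset.sum_product]
    exact Finset.sum_eq_zero (fun i _ => hrow0 i)
  -- off-diagonal sum is zero
  have hoff : ∑ p ∈ (Finset.univ ×ˢ Finset.univ).filter (fun p : Fin n × Fin n => ¬ p.1 = p.2),
      g p.1 p.2 = 0 := by
    apply Finset.sum_involution (fun p _ => Prod.swap p)
    · intro p hp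
      show g p.1 p.2 + g p.2 p.1 = 0
      rw [hsymm_g p.2 p.1]
      exact CharTwo.add_self_eq_zero _
    · intro p hp _
      intro hsw
      have h2 : p.2 = p.1 := congrArg Prod.fst hsw
      exact (Finset.mem_filter.mp hp).2 h2.symm
    · intro p hp
      simp only [Finset.mem_filter, Finset.mem_product, Finset.mem_univ, true_and] at hp ⊢
      exact fun h => hp (h.symm)
    · intro p hp
      rfl
  -- diagonal sum is zero
  have hdiagset : ∑ p ∈ (Finset.univ ×ˢ Finset.univ).filter
      (fun p : Fin n × Fin n => p.1 = p.2), g p.1 p.2 = ∑ i, g i i := by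
    apply Finset.sum_nbij' (fun p => p.1) (fun i => (i, i))
    · intro p hp; exact Finset.mem_univ _
    · intro i hi; simp
    · intro p hp
      have := (Finset.mem_filter.mp hp).2
      exact Prod.ext rfl this
    · intro i hi; rfl
    · intro p hp
      have := (Finset.mem_filter.mp hp).2
      rw [← this]
  have hdiag : ∑ i, g i i = 0 := by
    have hsp := Finset.sum_filter_add_sum_filter_not (Finset.univ ×ˢ Finset.univ)
      (fun p : Fin n × Fin n => p.1 = p.2) (fun p => g p.1 p.2)
    rw [htot] at hsp
    rw [hdiagset, hoff] at hsp
    simpa using hsp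
  -- column sum is zero
  have hcol0 : ∑ i, g i k = 0 := by
    have : ∀ i, g i k = g k i := fun i => hsymm_g i k
    rw [Finset.sum_congr rfl (fun i _ => this i)]
    exact hrow0 k
  -- conclude
  have hT : (((Finset.univ.filter fun i =>
      (A - Matrix.of fun r c => A r k * A c k) i i ≠ 0).card : ℕ) : ZMod 2) = 0 := by
    rw [← Finset.sum_boole]
    have hterm : ∀ i : Fin n, (if (A - Matrix.of fun r c => A r k * A c k) i i ≠ 0
        then (1 : ZMod 2) else 0) = g i i + g i k := by
      intro i
      have e1 := h01 i i
      have e2 := h01 i k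
      simp only [Matrix.sub_apply, Matrix.of_apply, hg]
      rcases e1 with e | e <;> rcases e2 with f | f <;> (simp [e, f]; try decide)
    rw [Finset.sum_congr rfl (fun i _ => hterm i), Finset.sum_add_distrib, hdiag, hcol0,
      add_zero]
  have := (ZMod.natCast_eq_zero_iff _ 2).mp hT
  exact even_iff_two_dvd.mpr this
end

section
/- Let B be a symmetric n×n real matrix with zero diagonal, and let G(B) be the graph on vertex set [n] with an edge {i,j} iff B(i,j) ≠ 0. If G(B) is bipartite, then every principal minor of B of odd order is zero. -/
open Matrix Finset

theorem stmt14 {n : ℕ} (B : Matrix (Fin n) (Fin n) ℝ) (hsym : B.IsSymm)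
    (hdiag : ∀ i, B i i = 0)
    (hbip : ∃ f : Fin n → Bool, ∀ i j, B i j ≠ 0 → f i ≠ f j) :
    ∀ μ : Finset (Fin n), Odd μ.card →
      (B.submatrix (fun x : μ => (x : Fin n)) (fun x : μ => (x : Fin n))).det = 0 := by
  obtain ⟨f, hf⟩ := hbip
  intro μ hμ
  set A := B.submatrix (fun x : μ => (x : Fin n)) (fun x : μ => (x : Fin n)) with hA
  set ε : μ → ℝ := fun x => if f (x : Fin n) then 1 else -1 with hε
  have hεsq : ∀ x, ε x * ε x = 1 := by
    intro x; simp only [hε]; split <;> norm_num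
  have key : Matrix.diagonal ε * A * Matrix.diagonal ε = -A := by
    ext i j
    rw [Matrix.mul_diagonal, Matrix.diagonal_mul]
    by_cases h : B (i : Fin n) (j : Fin n) = 0
    · simp [hA, Matrix.submatrix_apply, h]
    · have hne := hf _ _ h
      have : ε i * ε j = -1 := by
        simp only [hε]
        cases hfi : f (i : Fin n) <;> cases hfj : f (j : Fin n) <;>
          simp_all <;> norm_num
      have : ε i * A i j * ε j = (ε i * ε j) * A i j := by ring
      rw [this]; rw [‹ε i * ε j = -1›]; simp
  have hDD : Matrix.diagonal ε * Matrix.diagonal ε = 1 := by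
    rw [Matrix.diagonal_mul_diagonal]
    have : (fun x => ε x * ε x) = fun _ => (1 : ℝ) := funext hεsq
    rw [this, Matrix.diagonal_one]
  have hdet1 : Matrix.det (Matrix.diagonal ε) * Matrix.det (Matrix.diagonal ε) = 1 := by
    rw [← Matrix.det_mul, hDD, Matrix.det_one]
  have h1 : Matrix.det A = Matrix.det (-A) := by
    calc Matrix.det A = Matrix.det (Matrix.diagonal ε) * Matrix.det A *
          Matrix.det (Matrix.diagonal ε) := by
          rw [mul_comm, ← mul_assoc, hdet1, one_mul]
      _ = Matrix.det (Matrix.diagonal ε * A * Matrix.diagonal ε) := by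
          rw [Matrix.det_mul, Matrix.det_mul]
      _ = Matrix.det (-A) := by rw [key]
  rw [Matrix.det_neg] at h1
  have hcard : Fintype.card μ = μ.card := Fintype.card_coe μ
  rw [hcard, Odd.neg_one_pow hμ] at h1
  simp only [neg_one_mul] at h1
  linarith
end

section
/- Let B be a symmetric n×n real matrix with zero diagonal whose associated graph G(B) (edge {i,j} iff B(i,j)≠0) is not bipartite, and let g be the odd-girth of G(B) (the length of a shortest odd cycle). Then every principal minor of B of odd order strictly less than g is zero, and B has a nonzero principal minor of order g. Consequently, g equals the smallest odd order of a nonsingular principal submatrix of B. -/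
/-! A nonzero term in the Leibniz expansion of a principal minor of `B` comes from a permutation
without fixed points (the diagonal vanishes) whose cycles are cycles of `G(B)`. A permutation of
a set of odd size has a cycle of odd length, so every principal minor of odd order less than the
odd girth `g` vanishes. On the vertices of a shortest odd cycle `G(B)` induces the cycle itself,
since a chord would split it into two shorter cycles, one of them odd. Hence only the two
rotations of that cycle contribute to the corresponding minor of order `g`; they contribute the
same nonzero term, so the minor is twice a nonzero product. -/

open Matrix Finset

namespace Equiv.Perm

variable {α : Type*}

theorem IsCycleOn.exists_injective_zmod {f : Perm α} {s : Finset α} {a : α}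
    (hf : f.IsCycleOn s) (ha : a ∈ s) :
    ∃ c : ZMod #s → α, Function.Injective c ∧ ∀ k, c (k + 1) = f (c k) := by
  have : NeZero #s := ⟨(card_pos.2 ⟨a, ha⟩).ne'⟩
  have hc : ∀ m : ℕ, (f ^ ((m : ZMod #s)).val) a = (f ^ m) a := fun m => by
    rw [hf.pow_apply_eq_pow_apply ha, ZMod.val_natCast]
    exact Nat.mod_modEq m _
  refine ⟨fun k => (f ^ k.val) a, fun k k' h => ?_, fun k => ?_⟩
  · rw [← ZMod.natCast_zmod_val k, ← ZMod.natCast_zmod_val k', ZMod.natCast_eq_natCast_iff]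
    exact (hf.pow_apply_eq_pow_apply ha).1 h
  · change (f ^ (k + 1).val) a = f ((f ^ k.val) a)
    rw [← ZMod.natCast_zmod_val k, ← Nat.cast_succ, hc, hc, pow_succ', mul_apply]

variable [Fintype α] [DecidableEq α]

theorem exists_odd_card_support_cycleOf {σ : Perm α} (h : Odd #σ.support) :
    ∃ a, Odd #(σ.cycleOf a).support := by
  rw [← sum_cycleType, cycleType_def] at h
  by_contra! hall
  have heven : Even (∑ f ∈ σ.cycleFactorsFinset, #f.support) := by
    refine Finset.even_sum _ fun f hf => ?_
    obtain ⟨a, ha⟩ := (mem_cycleFactorsFinset_iff.1 hf).1.nonempty_support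
    rw [cycle_is_cycleOf ha hf]
    exact Nat.not_odd_iff_even.1 (hall a)
  exact Nat.not_odd_iff_even.2 heven h

end Equiv.Perm

theorem ZMod.perm_eq_addRight_one_or_neg_one {g : ℕ} (hg : Odd g) {σ : Equiv.Perm (ZMod g)}
    (hσ : ∀ i, σ i = i + 1 ∨ σ i = i - 1) :
    σ = Equiv.addRight 1 ∨ σ = Equiv.addRight (-1) := by
  have : NeZero g := ⟨hg.pos.ne'⟩
  set S := ({i | σ i = i + 1} : Finset (ZMod g))
  -- `σ i - i + 1` is `2` on `S` and `0` off it, while its sum over `i` is `g = 0`.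
  have hsum : ((#S * 2 : ℕ) : ZMod g) = 0 := by
    calc ((#S * 2 : ℕ) : ZMod g) = ∑ i, if σ i = i + 1 then 2 else 0 := by
          rw [sum_ite, sum_const_zero, add_zero, sum_const, nsmul_eq_mul, Nat.cast_mul,
            Nat.cast_ofNat]
      _ = ∑ i, (σ i - i + 1) := by
          refine sum_congr rfl fun i _ => ?_
          split_ifs with h
          · rw [h]; ring
          · rw [(hσ i).resolve_left h]; ring
      _ = 0 := by
          rw [sum_add_distrib, sum_sub_distrib, Equiv.sum_comp σ (fun i => i), sub_self,
            zero_add, sum_const, card_univ, ZMod.card, nsmul_one, ZMod.natCast_self]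
  have hdvd : g ∣ #S :=
    hg.coprime_two_right.dvd_of_dvd_mul_right ((ZMod.natCast_eq_zero_iff _ _).1 hsum)
  rcases Nat.eq_zero_or_pos #S with hS | hS
  · right
    ext i
    have : i ∉ S := by simp [card_eq_zero.1 hS]
    rw [(hσ i).resolve_left (by simpa [S] using this), Equiv.coe_addRight, sub_eq_add_neg]
  · left
    have hS : S = univ := eq_univ_of_card S
      ((card_le_univ S).antisymm (by rw [ZMod.card]; exact Nat.le_of_dvd hS hdvd))
    ext i
    exact (mem_filter.1 (hS ▸ mem_univ i : i ∈ S)).2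

namespace Matrix

variable {ι κ R : Type*}

def HasCycle [Zero R] (A : Matrix ι ι R) (l : ℕ) : Prop :=
  ∃ c : ZMod l → ι, Function.Injective c ∧ ∀ i, A (c i) (c (i + 1)) ≠ 0

section Zero

variable [Zero R] {A : Matrix ι ι R}

theorem HasCycle.of_submatrix {f : κ → ι} (hf : Function.Injective f) {l : ℕ}
    (h : (A.submatrix f f).HasCycle l) : A.HasCycle l :=
  let ⟨c, hc, hce⟩ := h
  ⟨f ∘ c, hf.comp hc, hce⟩

theorem hasCycle_of_perm [Fintype ι] [DecidableEq ι] {σ : Equiv.Perm ι}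
    (hσ : ∀ i, A i (σ i) ≠ 0) {a : ι} (ha : σ a ≠ a) :
    A.HasCycle #(σ.cycleOf a).support := by
  obtain ⟨c, hc, hstep⟩ := (σ.isCycleOn_support_cycleOf a).exists_injective_zmod
    (Equiv.Perm.mem_support_cycleOf_iff.2 ⟨.refl _ _, Equiv.Perm.mem_support.2 ha⟩)
  exact ⟨c, hc, fun k => hstep k ▸ hσ (c k)⟩

theorem hasCycle_succ_of_chord {g d : ℕ} {c : ZMod g → ι} (hc : Function.Injective c)
    (hce : ∀ i, A (c i) (c (i + 1)) ≠ 0) (hd : d < g) (i : ZMod g)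
    (hchord : A (c (i + d)) (c i) ≠ 0) : A.HasCycle (d + 1) := by
  refine ⟨fun k => c (i + k.val), fun k k' h => ZMod.val_injective _ ?_, fun k => ?_⟩
  · exact ((ZMod.natCast_eq_natCast_iff _ _ g).1 (add_left_cancel (hc h))).eq_of_lt_of_lt
      ((ZMod.val_lt k).trans_le hd) ((ZMod.val_lt k').trans_le hd)
  · have hsucc : k + 1 = ((k.val + 1 : ℕ) : ZMod (d + 1)) := by
      rw [Nat.cast_succ, ZMod.natCast_zmod_val]
    change A (c (i + k.val)) (c (i + (k + 1).val)) ≠ 0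
    rw [hsucc, ZMod.val_natCast]
    rcases (Nat.lt_succ_iff.1 (ZMod.val_lt k)).lt_or_eq with hlt | heq
    · rw [Nat.mod_eq_of_lt (by omega), Nat.cast_succ, ← add_assoc]
      exact hce _
    · rw [heq, Nat.mod_self]
      simpa using hchord

theorem IsSymm.chordless_of_shortest_odd_cycle (hA : A.IsSymm)
    (hdiag : ∀ i, A i i = 0) {g : ℕ} (hg : Odd g)
    (hmin : ∀ l, 3 ≤ l → Odd l → A.HasCycle l → g ≤ l) {c : ZMod g → ι}
    (hc : Function.Injective c) (hce : ∀ i, A (c i) (c (i + 1)) ≠ 0) {i j : ZMod g}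
    (hij : A (c i) (c j) ≠ 0) : j = i + 1 ∨ i = j + 1 := by
  have : NeZero g := ⟨hg.pos.ne'⟩
  set d := (j - i).val
  have hj : j = i + d := by rw [ZMod.natCast_zmod_val]; ring
  have hd : d < g := ZMod.val_lt _
  have hd0 : d ≠ 0 := fun h => hij (by rw [hj, h, Nat.cast_zero, add_zero, hdiag])
  by_contra! hne
  have hd1 : d ≠ 1 := fun h => hne.1 (by rw [hj, h, Nat.cast_one])
  have hdg : d + 1 ≠ g := fun h => hne.2 (by
    rw [hj, add_assoc, ← Nat.cast_add_one, h, ZMod.natCast_self, add_zero])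
  -- The chord splits the cycle into two shorter cycles whose lengths add up to `g + 2`.
  have hcyc₁ : A.HasCycle (d + 1) :=
    hasCycle_succ_of_chord hc hce hd i (by rwa [← hj, hA.apply])
  have hcyc₂ : A.HasCycle (g - d + 1) := by
    refine hasCycle_succ_of_chord hc hce (by omega) j ?_
    rwa [Nat.cast_sub hd.le, ZMod.natCast_self, hj, zero_sub, add_neg_cancel_right, ← hj]
  rcases Nat.even_or_odd d with heven | hodd
  · have := hmin _ (by omega) heven.add_one hcyc₁
    omega
  · have := hmin _ (by omega) (Nat.Odd.sub_odd hg hodd).add_one hcyc₂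
    omega

end Zero

theorem det_eq_zero_of_forall_not_hasCycle [Fintype ι] [DecidableEq ι] [CommRing R]
    {A : Matrix ι ι R} (hdiag : ∀ i, A i i = 0) (hodd : Odd (Fintype.card ι))
    (hcyc : ∀ l, 3 ≤ l → l ≤ Fintype.card ι → Odd l → ¬ A.HasCycle l) : A.det = 0 := by
  rw [← det_transpose, det_apply]
  refine sum_eq_zero fun σ _ => ?_
  by_contra hterm
  have hσ : ∀ i, A i (σ i) ≠ 0 := fun i h =>
    hterm (by rw [prod_eq_zero (mem_univ i) (by exact h), smul_zero])
  have hsupp : σ.support = univ :=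
    eq_univ_of_forall fun i => Equiv.Perm.mem_support.2 fun h => hσ i (by rw [h, hdiag])
  obtain ⟨a, ha⟩ := σ.exists_odd_card_support_cycleOf (by rwa [hsupp, card_univ])
  have hσa : σ a ≠ a := Equiv.Perm.support_cycleOf_nonempty.1 (card_pos.1 ha.pos)
  have h2 := Equiv.Perm.two_le_card_support_cycleOf_iff.2 hσa
  exact hcyc _ (by obtain ⟨t, ht⟩ := ha; omega) (card_le_univ _) ha (hasCycle_of_perm hσ hσa)

theorem det_submatrix_univ_map [Fintype κ] [DecidableEq κ] [DecidableEq ι] [CommRing R]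
    (A : Matrix ι ι R) (c : κ ↪ ι) :
    (A.submatrix (fun x : univ.map c => (x : ι)) (fun x : univ.map c => (x : ι))).det =
      (A.submatrix c c).det := by
  let e : κ ≃ univ.map c := Equiv.ofBijective (fun k => ⟨c k, mem_map_of_mem _ (mem_univ k)⟩)
    ⟨fun k k' h => c.injective (congrArg Subtype.val h), fun ⟨x, hx⟩ => by
      obtain ⟨k, -, rfl⟩ := mem_map.1 hx
      exact ⟨k, rfl⟩⟩
  rw [← det_submatrix_equiv_self e]
  rfl

theorem det_ne_zero_of_supported_on_cycle [CommRing R] [IsDomain R] [NeZero (2 : R)] {g : ℕ}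
    [NeZero g] (hg : Odd g) (hg1 : 1 < g) {A : Matrix (ZMod g) (ZMod g) R} (hA : A.IsSymm)
    (hsupp : ∀ i j, A i j ≠ 0 → j = i + 1 ∨ i = j + 1) (hcyc : ∀ i, A i (i + 1) ≠ 0) :
    A.det ≠ 0 := by
  set ρ : Equiv.Perm (ZMod g) := Equiv.addRight 1
  have hρ : ρ ≠ ρ.symm := fun h => by
    have h2 : ((2 : ℕ) : ZMod g) = 0 := by
      have := congrArg (· 0) h
      simp only [ρ, Equiv.addRight_symm, Equiv.coe_addRight, zero_add] at this
      push_cast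
      linear_combination this
    have := Nat.le_of_dvd two_pos ((ZMod.natCast_eq_zero_iff _ _).1 h2)
    obtain ⟨t, rfl⟩ := hg
    omega
  have hterm : ∀ σ, σ ≠ ρ ∧ σ ≠ ρ.symm → Equiv.Perm.sign σ • ∏ i, A (σ i) i = 0 := by
    rintro σ ⟨hσρ, hσρ'⟩
    by_contra h
    have hσ : ∀ i, σ i = i + 1 ∨ σ i = i - 1 := fun i =>
      ((hsupp _ _ fun h' => h (by rw [prod_eq_zero (mem_univ i) (by exact h'), smul_zero])).imp
        (fun h' => eq_sub_of_add_eq h'.symm) id).symm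
    rcases ZMod.perm_eq_addRight_one_or_neg_one hg hσ with rfl | rfl
    · exact hσρ rfl
    · exact hσρ' (Equiv.addRight_symm 1).symm
  have hprod : ∏ i, A (ρ i) i = ∏ i, A i (i + 1) :=
    prod_congr rfl fun i _ => hA.apply i (i + 1)
  have hprod' : ∏ i, A (ρ.symm i) i = ∏ i, A i (i + 1) := by
    rw [← Equiv.prod_comp ρ]
    simp [ρ]
  rw [det_apply, Fintype.sum_eq_add ρ ρ.symm hρ hterm, Equiv.Perm.sign_symm, hprod, hprod',
    ← smul_add, smul_ne_zero_iff_ne, ← two_mul]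
  exact mul_ne_zero two_ne_zero (prod_ne_zero_iff.2 fun i _ => hcyc i)

end Matrix

theorem stmt15 {n : ℕ} (B : Matrix (Fin n) (Fin n) ℝ) (hsym : B.IsSymm)
    (hdiag : ∀ i, B i i = 0) (g : ℕ) (hgodd : Odd g) (hg3 : 3 ≤ g)
    (hcycle : ∃ c : ZMod g → Fin n, Function.Injective c ∧
      ∀ i, B (c i) (c (i + 1)) ≠ 0)
    (hmin : ∀ l : ℕ, 3 ≤ l → Odd l →
      (∃ c : ZMod l → Fin n, Function.Injective c ∧ ∀ i, B (c i) (c (i + 1)) ≠ 0) →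
      g ≤ l) :
    (∀ μ : Finset (Fin n), Odd μ.card → μ.card < g →
      (B.submatrix (fun x : μ => (x : Fin n)) (fun x : μ => (x : Fin n))).det = 0) ∧
    (∃ μ : Finset (Fin n), μ.card = g ∧
      (B.submatrix (fun x : μ => (x : Fin n)) (fun x : μ => (x : Fin n))).det ≠ 0) ∧
    IsLeast {m : ℕ | Odd m ∧ ∃ μ : Finset (Fin n), μ.card = m ∧
      (B.submatrix (fun x : μ => (x : Fin n)) (fun x : μ => (x : Fin n))).det ≠ 0} g := by
  obtain ⟨c, hc, hce⟩ := hcycle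
  have : NeZero g := ⟨by omega⟩
  have hzero : ∀ μ : Finset (Fin n), Odd #μ → #μ < g →
      (B.submatrix (fun x : μ => (x : Fin n)) (fun x : μ => (x : Fin n))).det = 0 :=
    fun μ hodd hlt => det_eq_zero_of_forall_not_hasCycle (fun _ => hdiag _)
      (by rwa [Fintype.card_coe]) fun l hl3 hlμ hlodd hcyc => by
        have := hmin l hl3 hlodd (hcyc.of_submatrix Subtype.val_injective)
        rw [Fintype.card_coe] at hlμ
        omega
  set μ := univ.map ⟨c, hc⟩
  have hμ : #μ = g := by simp [μ]
  have hdet : (B.submatrix (fun x : μ => (x : Fin n)) (fun x : μ => (x : Fin n))).det ≠ 0 := by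
    rw [det_submatrix_univ_map]
    exact det_ne_zero_of_supported_on_cycle hgodd (by omega) (hsym.submatrix c)
      (fun _ _ hij => hsym.chordless_of_shortest_odd_cycle hdiag hgodd hmin hc hce hij) hce
  refine ⟨hzero, ⟨μ, hμ, hdet⟩, ⟨hgodd, μ, hμ, hdet⟩, ?_⟩
  rintro m ⟨hmodd, ν, rfl, hν⟩
  exact not_lt.1 fun hlt => hν (hzero ν hmodd hlt)
end

section
/- Let B be a symmetric n×n real matrix, μ ⊆ [n] with |μ| = k such that B[μ] is nonsingular, and let r = rank(B). If m is an integer with k < m ≤ r, then there exists γ ⊆ [n]∖μ with |γ∪μ| equal to m or m+1 such that B[γ∪μ] is nonsingular; i.e., B[μ] is contained in a nonsingular principal submatrix of B of order m or m+1. -/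
/-! For `γ` disjoint from `μ`, the Schur determinant formula gives
`det B[γ ∪ μ] = det B[μ] * det S[γ]` with `S = B / B[μ]`. If `S` vanished outside `μ` it would
vanish identically, and then `B = B[·, μ] B[μ]⁻¹ B[μ, ·]` would have rank at most `|μ|`. So when
`|μ| < rank B`, the symmetric matrix `S` has a nonzero entry off `μ`: either a diagonal entry
`S i i` (take `γ = {i}`), or, when that diagonal vanishes, an entry `S i j` with
`det S[{i, j}] = -(S i j) ^ 2 ≠ 0` (take `γ = {i, j}`). Thus `B[μ]` extends to a nonsingular
principal submatrix one or two sizes larger, and repeating this until the size reaches `m`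
overshoots by at most one. -/

open Matrix Finset

namespace Matrix

variable {ι K : Type*} [DecidableEq ι] [Field K]

abbrev principalSubmatrix {α : Type*} (B : Matrix ι ι α) (s : Finset ι) : Matrix s s α :=
  B.submatrix (↑) (↑)

theorem det_principalSubmatrix_singleton {R : Type*} [CommRing R] (M : Matrix ι ι R) (i : ι) :
    (M.principalSubmatrix {i}).det = M i i :=
  det_eq_elem_of_subsingleton _ (⟨i, mem_singleton_self i⟩ : ({i} : Finset ι))

theorem det_principalSubmatrix_pair {R : Type*} [CommRing R] (M : Matrix ι ι R) {i j : ι}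
    (hij : i ≠ j) : (M.principalSubmatrix {i, j}).det = M i i * M j j - M i j * M j i := by
  let e : Fin 2 ≃ ({i, j} : Finset ι) := Equiv.ofBijective ![⟨i, by simp⟩, ⟨j, by simp⟩] (by
    constructor
    · intro a b
      fin_cases a <;> fin_cases b <;> simp [hij, hij.symm]
    · rintro ⟨k, hk⟩
      rcases mem_insert.mp hk with rfl | hk
      · exact ⟨0, rfl⟩
      · exact ⟨1, Subtype.ext (mem_singleton.mp hk).symm⟩)
  rw [← det_submatrix_equiv_self e, det_fin_two]
  rfl

/-- The Schur complement `B / B[μ]`, kept as an `ι × ι` matrix whose rows and columns in `μ`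
vanish when `B[μ]` is invertible. -/
noncomputable def schurComplement (B : Matrix ι ι K) (μ : Finset ι) : Matrix ι ι K :=
  B - B.submatrix id ((↑) : μ → ι) * (B.principalSubmatrix μ)⁻¹ * B.submatrix ((↑) : μ → ι) id

theorem schurComplement_apply_of_mem_left (B : Matrix ι ι K) {μ : Finset ι}
    (hμ : IsUnit (B.principalSubmatrix μ).det) {i : ι} (hi : i ∈ μ) (j : ι) :
    B.schurComplement μ i j = 0 := by
  have hrows : (B.schurComplement μ).submatrix ((↑) : μ → ι) id = 0 := by
    rw [schurComplement, submatrix_sub, Pi.sub_apply, Pi.sub_apply,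
      submatrix_mul _ _ _ id _ Function.bijective_id, submatrix_mul _ _ _ id _ Function.bijective_id]
    simp [mul_nonsing_inv _ hμ]
  exact congrFun (congrFun hrows ⟨i, hi⟩) j

theorem schurComplement_apply_of_mem_right (B : Matrix ι ι K) {μ : Finset ι}
    (hμ : IsUnit (B.principalSubmatrix μ).det) (i : ι) {j : ι} (hj : j ∈ μ) :
    B.schurComplement μ i j = 0 := by
  have hcols : (B.schurComplement μ).submatrix id ((↑) : μ → ι) = 0 := by
    rw [schurComplement, submatrix_sub, Pi.sub_apply, Pi.sub_apply,
      submatrix_mul _ _ _ id _ Function.bijective_id, submatrix_mul _ _ _ id _ Function.bijective_id]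
    simp [Matrix.mul_assoc, nonsing_inv_mul _ hμ]
  exact congrFun (congrFun hcols i) ⟨j, hj⟩

theorem IsSymm.schurComplement {B : Matrix ι ι K} (hB : B.IsSymm) (μ : Finset ι) :
    (B.schurComplement μ).IsSymm := by
  have hμ : (B.principalSubmatrix μ).IsSymm := hB.submatrix _
  rw [Matrix.IsSymm, Matrix.schurComplement, transpose_sub, transpose_mul, transpose_mul,
    transpose_nonsing_inv, hμ.eq, transpose_submatrix, transpose_submatrix, hB.eq, Matrix.mul_assoc]

theorem det_principalSubmatrix_union (B : Matrix ι ι K) {γ μ : Finset ι} (hγμ : Disjoint γ μ)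
    (hμ : IsUnit (B.principalSubmatrix μ).det) :
    (B.principalSubmatrix (γ ∪ μ)).det =
      (B.principalSubmatrix μ).det * ((B.schurComplement μ).principalSubmatrix γ).det := by
  have : Invertible (B.principalSubmatrix μ) := invertibleOfIsUnitDet _ hμ
  let e := Equiv.Finset.union γ μ hγμ
  have hblocks : (B.principalSubmatrix (γ ∪ μ)).submatrix e e =
      fromBlocks (B.principalSubmatrix γ) (B.submatrix (↑) (↑)) (B.submatrix (↑) (↑))
        (B.principalSubmatrix μ) := by
    ext (a | a) (b | b) <;> rfl
  rw [← det_submatrix_equiv_self e, hblocks, det_fromBlocks₂₂, invOf_eq_nonsing_inv]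
  -- `(B.schurComplement μ)[γ]` unfolds to `B[γ] - B[γ, μ] * B[μ]⁻¹ * B[μ, γ]`.
  congr 2

theorem rank_le_card_of_schurComplement_eq_zero [Fintype ι] (B : Matrix ι ι K) (μ : Finset ι)
    (h : B.schurComplement μ = 0) : B.rank ≤ μ.card := by
  rw [schurComplement, sub_eq_zero] at h
  calc B.rank = (B.submatrix id ((↑) : μ → ι) * (B.principalSubmatrix μ)⁻¹ *
        B.submatrix ((↑) : μ → ι) id).rank := congrArg rank h
    _ ≤ (B.submatrix id ((↑) : μ → ι)).rank := (rank_mul_le_left _ _).trans (rank_mul_le_left _ _)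
    _ ≤ μ.card := (rank_le_card_width _).trans_eq (Fintype.card_coe μ)

theorem IsSymm.exists_isUnit_det_principalSubmatrix_union [Fintype ι] {B : Matrix ι ι K}
    (hB : B.IsSymm) {μ : Finset ι} (hμ : IsUnit (B.principalSubmatrix μ).det)
    (hrank : μ.card < B.rank) :
    ∃ γ : Finset ι, Disjoint γ μ ∧ 0 < γ.card ∧ γ.card ≤ 2 ∧
      IsUnit (B.principalSubmatrix (γ ∪ μ)).det := by
  set S := B.schurComplement μ
  have hunion {γ : Finset ι} (hγ : Disjoint γ μ) (hS : IsUnit (S.principalSubmatrix γ).det) :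
      IsUnit (B.principalSubmatrix (γ ∪ μ)).det := by
    rw [det_principalSubmatrix_union B hγ hμ]
    exact hμ.mul hS
  by_cases hdiag : ∃ i ∉ μ, S i i ≠ 0
  · obtain ⟨i, hi, hSii⟩ := hdiag
    have hγ : Disjoint {i} μ := disjoint_singleton_left.2 hi
    refine ⟨{i}, hγ, by simp, by simp, hunion hγ ?_⟩
    rw [det_principalSubmatrix_singleton]
    exact hSii.isUnit
  push Not at hdiag
  by_cases hoff : ∃ i ∉ μ, ∃ j ∉ μ, S i j ≠ 0
  · obtain ⟨i, hi, j, hj, hSij⟩ := hoff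
    have hij : i ≠ j := by
      rintro rfl
      exact hSij (hdiag i hi)
    have hγ : Disjoint {i, j} μ := by simp [hi, hj]
    refine ⟨{i, j}, hγ, by simp, (card_pair hij).le, hunion hγ ?_⟩
    have hSji : S j i = S i j := (hB.schurComplement μ).apply i j
    rw [det_principalSubmatrix_pair S hij, hdiag i hi, hdiag j hj, hSji]
    simpa using hSij
  push Not at hoff
  have hS : S = 0 := by
    ext i j
    by_cases hi : i ∈ μ
    · exact schurComplement_apply_of_mem_left B hμ hi j
    by_cases hj : j ∈ μ
    · exact schurComplement_apply_of_mem_right B hμ i hj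
    exact hoff i hi j hj
  exact absurd (rank_le_card_of_schurComplement_eq_zero B μ hS) hrank.not_ge

end Matrix

theorem stmt16 {n : ℕ} (B : Matrix (Fin n) (Fin n) ℝ) (hsym : B.IsSymm)
    (μ : Finset (Fin n))
    (hμ : IsUnit (B.submatrix (fun x : μ => (x : Fin n)) (fun x : μ => (x : Fin n))).det)
    (m : ℕ) (hm1 : μ.card < m) (hm2 : m ≤ B.rank) :
    ∃ γ : Finset (Fin n), Disjoint γ μ ∧
      ((γ ∪ μ).card = m ∨ (γ ∪ μ).card = m + 1) ∧
      IsUnit (B.submatrix (fun x : ↥(γ ∪ μ) => (x : Fin n))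
        (fun x : ↥(γ ∪ μ) => (x : Fin n))).det := by
  induction hgap : m - μ.card using Nat.strong_induction_on generalizing μ with
  | _ gap ih =>
    obtain ⟨γ₀, hγ₀μ, hγ₀pos, hγ₀le, hγ₀⟩ :=
      hsym.exists_isUnit_det_principalSubmatrix_union hμ (hm1.trans_le hm2)
    have hcard₀ := card_union_of_disjoint hγ₀μ
    by_cases hreached : (γ₀ ∪ μ).card = m ∨ (γ₀ ∪ μ).card = m + 1
    · exact ⟨γ₀, hγ₀μ, hreached, hγ₀⟩
    obtain ⟨γ, hγ, hcard, hunit⟩ := ih _ (by omega) (γ₀ ∪ μ) hγ₀ (by omega) rfl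
    refine ⟨γ ∪ γ₀, disjoint_union_left.2 ⟨hγ.mono_right subset_union_right, hγ₀μ⟩, ?_, ?_⟩
    · rwa [union_assoc]
    · rwa [union_assoc]
end

section
/- Let n ≥ 3 be odd and let A be the 0–1 adjacency matrix of the cycle graph Cₙ (so A(i,j) = 1 iff |i−j| ≡ 1 mod n). Then A is nonsingular, every principal minor of A of order n−1 is nonzero, and all n principal minors of A of order n−1 are equal; consequently A⁻¹ is equimodular with constant diagonal. -/
open Matrix Finset

/-! For `n = 2m + 1` the adjacency matrix of `Cₙ` is the circulant matrix `P + P⁻¹` of the cyclic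
shift `P`. Since `2` is invertible modulo `n`, every offset is uniquely `2k + 1` with `k < n`, and
the circulant whose entry at offset `2k + 1` is `(-1)ᵏ / 2` is the inverse: the offsets `d ∓ 1`
correspond to consecutive values of `k`, so their signs cancel, except across the wrap-around
`k = n - 1 → 0` (which happens at `d = 0`) where `n - 1` is even. Hence every entry of `A⁻¹` is
`±1/2`, and by the cofactor formula each principal minor of order `n - 1` is
`det A · A⁻¹ᵢᵢ = det A · (-1)ᵐ / 2`. -/

theorem Matrix.circulant_single_one_mulVec {ι R : Type*} [Fintype ι] [DecidableEq ι]
    [AddCommGroup ι] [NonAssocSemiring R] (k : ι) (v : ι → R) :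
    circulant (Pi.single k 1) *ᵥ v = fun d => v (d - k) := by
  ext d
  simp [mulVec, dotProduct, circulant_apply, Pi.single_apply, sub_eq_iff_comm]

theorem Matrix.det_submatrix_ne_eq_adjugate_apply {R : Type*} [CommRing R] {n : ℕ}
    (A : Matrix (Fin (n + 1)) (Fin (n + 1)) R) (i : Fin (n + 1)) :
    (A.submatrix (fun x : {j // j ≠ i} => (x : Fin (n + 1)))
      (fun x : {j // j ≠ i} => (x : Fin (n + 1)))).det = A.adjugate i i := by
  rw [adjugate_fin_succ_eq_det_submatrix, (Even.add_self (i : ℕ)).neg_one_pow, one_mul,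
    ← det_submatrix_equiv_self (finSuccAboveEquiv i)]
  rfl

theorem Matrix.det_submatrix_ne_eq_det_mul_inv_apply {K : Type*} [Field K] {n : ℕ}
    (A : Matrix (Fin (n + 1)) (Fin (n + 1)) K) (hA : A.det ≠ 0) (i : Fin (n + 1)) :
    (A.submatrix (fun x : {j // j ≠ i} => (x : Fin (n + 1)))
      (fun x : {j // j ≠ i} => (x : Fin (n + 1)))).det = A.det * A⁻¹ i i := by
  rw [det_submatrix_ne_eq_adjugate_apply, inv_def, smul_apply, smul_eq_mul, ← mul_assoc,
    Ring.inverse_eq_inv', mul_inv_cancel₀ hA, one_mul]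

theorem Fin.val_add_one_mod_eq_iff {n : ℕ} (a b : Fin (n + 1)) :
    (a.val + 1) % (n + 1) = b.val ↔ b - a = 1 := by
  rw [sub_eq_iff_eq_add', Fin.ext_iff, Fin.val_add, Fin.val_one', Nat.add_mod_mod, eq_comm]

namespace OddCycle

variable {K : Type*} [Field K] {m : ℕ}

theorem neg_one_pow_val_add_neg_one_pow_val_add_one {R : Type*} [Ring R] (k : Fin (2 * m + 1)) :
    (-1 : R) ^ k.val + (-1) ^ (k + 1).val = if k + 1 = 0 then 2 else 0 := by
  rw [Fin.val_add_one]
  split_ifs with hlast hzero hzero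
  · rw [hlast, Fin.val_last, pow_mul]
    norm_num
  · exact absurd (hlast ▸ Fin.last_add_one _) hzero
  · have := congrArg Fin.val hzero
    rw [Fin.val_add_one, if_neg hlast] at this
    exact absurd this (Nat.succ_ne_zero _)
  · rw [pow_succ, mul_neg_one, add_neg_cancel]

section

open Fin.CommRing

theorem two_mul_succ_eq_one : (2 : Fin (2 * m + 1)) * (m + 1) = 1 := by
  have h : ((2 * m + 1 : ℕ) : Fin (2 * m + 1)) = 0 := by simp
  push_cast at h ⊢
  linear_combination h

/-- `(m + 1 : Fin (2 m + 1))` is `1 / 2`, so this is `2 k + 1 ↦ (-1) ^ k / 2`. -/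
noncomputable def cycleInvVec (K : Type*) [Field K] (m : ℕ) : Fin (2 * m + 1) → K :=
  fun d => (-1) ^ ((m + 1 : Fin (2 * m + 1)) * (d - 1)).val / 2

theorem cycleInvVec_sub_one_add_cycleInvVec_add_one (h2 : (2 : K) ≠ 0) (d : Fin (2 * m + 1)) :
    cycleInvVec K m (d - 1) + cycleInvVec K m (d + 1) = if d = 0 then 1 else 0 := by
  simp only [cycleInvVec, add_sub_cancel_right, ← add_div]
  set h : Fin (2 * m + 1) := m + 1
  have hh : 2 * h = 1 := two_mul_succ_eq_one
  have hstep : h * d = h * (d - 1 - 1) + 1 := by linear_combination hh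
  have hzero : h * (d - 1 - 1) + 1 = 0 ↔ d = 0 := by
    rw [← hstep]
    refine ⟨fun hd => ?_, fun hd => by rw [hd, mul_zero]⟩
    linear_combination (-d) * hh + 2 * hd
  rw [hstep, neg_one_pow_val_add_neg_one_pow_val_add_one]
  simp only [hzero]
  split_ifs
  exacts [div_self h2, zero_div 2]

theorem cycleInvVec_eq_or_eq_neg (d : Fin (2 * m + 1)) :
    cycleInvVec K m d = 1 / 2 ∨ cycleInvVec K m d = -(1 / 2) := by
  rcases neg_one_pow_eq_or K ((m + 1 : Fin (2 * m + 1)) * (d - 1)).val with h | h <;>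
    simp [cycleInvVec, h, neg_div]

end

theorem cycleInvVec_ne_zero (h2 : (2 : K) ≠ 0) (d : Fin (2 * m + 1)) : cycleInvVec K m d ≠ 0 :=
  div_ne_zero (pow_ne_zero _ (neg_ne_zero.2 one_ne_zero)) h2

def cycleAdjVec (K : Type*) [Field K] (m : ℕ) : Fin (2 * m + 1) → K :=
  Pi.single 1 1 + Pi.single (-1) 1

theorem circulant_cycleAdjVec_mul_circulant_cycleInvVec (h2 : (2 : K) ≠ 0) :
    circulant (cycleAdjVec K m) * circulant (cycleInvVec K m) = 1 := by
  rw [circulant_mul, cycleAdjVec, circulant_add, add_mulVec, circulant_single_one_mulVec,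
    circulant_single_one_mulVec, ← circulant_single_one]
  congr 1
  ext d
  simp only [Pi.add_apply, sub_neg_eq_add, cycleInvVec_sub_one_add_cycleInvVec_add_one h2,
    Pi.single_apply]

theorem one_ne_neg_one (hm : 1 ≤ m) : (1 : Fin (2 * m + 1)) ≠ -1 := by
  intro h
  have := congrArg Fin.val (eq_neg_iff_add_eq_zero.1 h)
  rw [Fin.val_add, Fin.val_one', Nat.one_mod_eq_one.2 (by omega), Fin.val_zero,
    Nat.mod_eq_of_lt (by omega)] at this
  omega

theorem circulant_cycleAdjVec_apply (hm : 1 ≤ m) (i j : Fin (2 * m + 1)) :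
    circulant (cycleAdjVec K m) i j =
      if (i.val + 1) % (2 * m + 1) = j.val ∨ (j.val + 1) % (2 * m + 1) = i.val then 1 else 0 := by
  simp only [Fin.val_add_one_mod_eq_iff, ← neg_sub i j, neg_eq_iff_eq_neg, circulant_apply,
    cycleAdjVec, Pi.add_apply, Pi.single_apply]
  have := one_ne_neg_one hm
  split_ifs <;> simp_all

end OddCycle

open OddCycle in
theorem stmt17 {n : ℕ} (hn : 3 ≤ n) (hodd : Odd n)
    (A : Matrix (Fin n) (Fin n) ℝ)
    (hA : ∀ i j : Fin n,
      A i j = if (i.val + 1) % n = j.val ∨ (j.val + 1) % n = i.val then 1 else 0) :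
    A.det ≠ 0 ∧
    (∀ i : Fin n,
      (A.submatrix (fun x : {j : Fin n // j ≠ i} => (x : Fin n))
        (fun x : {j : Fin n // j ≠ i} => (x : Fin n))).det ≠ 0) ∧
    (∀ i i' : Fin n,
      (A.submatrix (fun x : {j : Fin n // j ≠ i} => (x : Fin n))
        (fun x : {j : Fin n // j ≠ i} => (x : Fin n))).det =
      (A.submatrix (fun x : {j : Fin n // j ≠ i'} => (x : Fin n))
        (fun x : {j : Fin n // j ≠ i'} => (x : Fin n))).det) ∧
    ∃ α : ℝ, (∀ i j, A⁻¹ i j = α ∨ A⁻¹ i j = -α) ∧ (∀ i j, A⁻¹ i i = A⁻¹ j j) := by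
  obtain ⟨m, rfl⟩ := hodd
  have hA : A = circulant (cycleAdjVec ℝ m) := by
    ext i j
    rw [hA, circulant_cycleAdjVec_apply (by omega)]
  have hAB := circulant_cycleAdjVec_mul_circulant_cycleInvVec (K := ℝ) (m := m) two_ne_zero
  rw [← hA] at hAB
  have hinv : A⁻¹ = circulant (cycleInvVec ℝ m) := inv_eq_right_inv hAB
  have hdet : A.det ≠ 0 := det_ne_zero_of_right_inverse hAB
  have hminor (i : Fin (2 * m + 1)) :
      (A.submatrix (fun x : {j // j ≠ i} => (x : Fin (2 * m + 1)))
        (fun x : {j // j ≠ i} => (x : Fin (2 * m + 1)))).det = A.det * cycleInvVec ℝ m 0 := by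
    rw [det_submatrix_ne_eq_det_mul_inv_apply A hdet, hinv, circulant_apply, sub_self]
  refine ⟨hdet, fun i => ?_, fun i i' => by rw [hminor, hminor], 1 / 2, fun i j => ?_,
    fun i j => by simp only [hinv, circulant_apply, sub_self]⟩
  · rw [hminor]
    exact mul_ne_zero hdet (cycleInvVec_ne_zero two_ne_zero 0)
  · rw [hinv]
    exact cycleInvVec_eq_or_eq_neg _
end

section
/- Let n ≥ 3 be odd and A the adjacency matrix of the cycle Cₙ over ℝ. Then every principal minor of A of odd order strictly less than n is zero, every principal minor of order n−1 is nonzero, and det(A) ≠ 0 (in fact det(A) = 2 in absolute value). -/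
open Matrix Finset

lemma sv {m : ℕ} (p : Fin (m+1)) (i : Fin m) :
    (p.succAbove i).val = if i.val < p.val then i.val else i.val + 1 := by
  rw [Fin.succAbove]
  split_ifs with h h' h' <;>
    simp_all [Fin.lt_def, Fin.coe_castSucc, Fin.val_succ]

lemma adj_char {n : ℕ} (hn : 1 ≤ n) {a b : ℕ} (ha : a < n) (hb : b < n) :
    ((a+1) % n = b ∨ (b+1) % n = a) ↔
      (a+1 = b ∨ b+1 = a ∨ (a+1 = n ∧ b = 0) ∨ (b+1 = n ∧ a = 0)) := by
  have h1 : ∀ c d : ℕ, c < n → d < n → ((c+1) % n = d ↔ (c+1 = d ∨ (c+1 = n ∧ d = 0))) := by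
    intro c d hc hd
    rcases Nat.lt_or_ge (c+1) n with h | h
    · rw [Nat.mod_eq_of_lt h]; omega
    · have hcn : c + 1 = n := by omega
      rw [hcn, Nat.mod_self]; omega
  rw [h1 a b ha hb, h1 b a hb ha]; omega

lemma det_eq_zero_of_sign {ι : Type*} [Fintype ι] [DecidableEq ι]
    (B : Matrix ι ι ℝ) (d : ι → ℝ)
    (hd : ∀ i, d i = 1 ∨ d i = -1)
    (h : ∀ i j, B i j ≠ 0 → d i * d j = -1)
    (hodd : Odd (Fintype.card ι)) : B.det = 0 := by
  have key : Matrix.diagonal d * B * Matrix.diagonal d = -B := by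
    ext i j
    rw [Matrix.mul_diagonal, Matrix.diagonal_mul, Matrix.neg_apply]
    by_cases hB : B i j = 0
    · rw [hB]; ring
    · have hh := h i j hB
      calc d i * B i j * d j = (d i * d j) * B i j := by ring
        _ = -B i j := by rw [hh]; ring
  have hdet := congrArg Matrix.det key
  rw [Matrix.det_mul, Matrix.det_mul, Matrix.det_neg, Matrix.det_diagonal,
    hodd.neg_one_pow] at hdet
  have hprod : (∏ i, d i) * (∏ i, d i) = 1 := by
    rw [← Finset.prod_mul_distrib]
    exact Finset.prod_eq_one (fun i _ => by rcases hd i with h'|h' <;> rw [h'] <;> norm_num)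
  nlinarith [hdet, hprod]

def pm (m : ℕ) : Matrix (Fin m) (Fin m) ℝ :=
  Matrix.of fun i j => if (i:ℕ)+1 = (j:ℕ) ∨ (j:ℕ)+1 = (i:ℕ) then 1 else 0

lemma pm_apply {m : ℕ} (i j : Fin m) :
    pm m i j = if (i:ℕ)+1 = (j:ℕ) ∨ (j:ℕ)+1 = (i:ℕ) then 1 else 0 := rfl

lemma detpm_odd {m : ℕ} (h : Odd m) : (pm m).det = 0 := by
  refine det_eq_zero_of_sign (pm m) (fun i => (-1:ℝ)^(i:ℕ)) ?_ ?_ ?_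
  · intro i
    rcases Nat.even_or_odd (i:ℕ) with h'|h'
    · left; exact h'.neg_one_pow
    · right; exact h'.neg_one_pow
  · intro i j hB
    rw [pm_apply] at hB
    have hc : (i:ℕ)+1 = (j:ℕ) ∨ (j:ℕ)+1 = (i:ℕ) := by
      by_contra hc; rw [if_neg hc] at hB; exact hB rfl
    rw [← pow_add]
    refine Odd.neg_one_pow ?_
    rcases hc with h'|h'
    · exact ⟨(i:ℕ), by omega⟩
    · exact ⟨(j:ℕ), by omega⟩
  · simpa using h

lemma detpm_step (m : ℕ) : (pm (m+2)).det = -(pm m).det := by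
  rw [Matrix.det_succ_row_zero]
  rw [Finset.sum_eq_single (1 : Fin (m+2))]
  · rw [Matrix.det_succ_column_zero]
    rw [Finset.sum_eq_single (0 : Fin (m+1))]
    · have h1 : (pm (m+2)) 0 1 = 1 := by
        rw [pm_apply]; simp
      have h2 : (pm (m+2)).submatrix Fin.succ (Fin.succAbove 1) 0 0 = 1 := by
        rw [Matrix.submatrix_apply, pm_apply]
        have : ((1 : Fin (m+2)).succAbove 0).val = 0 := by rw [sv]; simp
        simp [this]
      have h3 : ((pm (m+2)).submatrix Fin.succ (Fin.succAbove 1)).submatrix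
          (Fin.succAbove 0) Fin.succ = pm m := by
        ext k l
        rw [Matrix.submatrix_apply, Matrix.submatrix_apply, pm_apply, pm_apply]
        have hr : ((Fin.succ ((0:Fin (m+1)).succAbove k)) : ℕ) = k + 2 := by
          rw [Fin.val_succ, sv]; simp
        have hcl : (((1:Fin (m+2)).succAbove (Fin.succ l)) : ℕ) = l + 2 := by
          rw [sv, Fin.val_succ]
          have : ¬ ((l:ℕ) + 1 < (1:Fin (m+2)).val) := by simp
          rw [if_neg this]
        rw [hr, hcl]
        apply if_congr _ rfl rfl
        omega
      rw [h1, h2, h3]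
      simp
    · intro b _ hb
      have hval : (b:ℕ) ≠ 0 := fun h => hb (Fin.ext h)
      have : (pm (m+2)).submatrix Fin.succ (Fin.succAbove 1) b 0 = 0 := by
        rw [Matrix.submatrix_apply, pm_apply]
        have h0 : (((1:Fin (m+2)).succAbove 0) : ℕ) = 0 := by rw [sv]; simp
        rw [h0, Fin.val_succ, if_neg (by omega)]
      rw [this]; ring
    · simp
  · intro b _ hb
    have hval : (b:ℕ) ≠ 1 := fun h => hb (Fin.ext (by simpa using h))
    have : (pm (m+2)) 0 b = 0 := by
      rw [pm_apply, if_neg (by simp; omega)]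
    rw [this]; ring
  · simp

lemma detpm_even (k : ℕ) : (pm (2*k)).det = (-1:ℝ)^k := by
  induction k with
  | zero => simp [Matrix.det_isEmpty]
  | succ k ih =>
    rw [show 2*(k+1) = 2*k+2 by ring, detpm_step, ih]
    ring

lemma sum_two {m : ℕ} (f : Fin m → ℝ) (a b : Fin m) (hab : a ≠ b)
    (h : ∀ x, x ≠ a → x ≠ b → f x = 0) : ∑ x, f x = f a + f b := by
  rw [← Finset.sum_pair hab]
  refine (Finset.sum_subset (Finset.subset_univ _) ?_).symm
  intro x _ hx
  simp only [Finset.mem_insert, Finset.mem_singleton, not_or] at hx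
  exact h x hx.1 hx.2

theorem stmt18 {n : ℕ} (hn : 3 ≤ n) (hodd : Odd n)
    (A : Matrix (Fin n) (Fin n) ℝ)
    (hA : ∀ i j : Fin n,
      A i j = if (i.val + 1) % n = j.val ∨ (j.val + 1) % n = i.val then 1 else 0) :
    (∀ μ : Finset (Fin n), Odd μ.card → μ.card < n →
      (A.submatrix (fun x : μ => (x : Fin n)) (fun x : μ => (x : Fin n))).det = 0) ∧
    (∀ i : Fin n,
      (A.submatrix (fun x : {j : Fin n // j ≠ i} => (x : Fin n))
        (fun x : {j : Fin n // j ≠ i} => (x : Fin n))).det ≠ 0) ∧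
    A.det ≠ 0 ∧ |A.det| = 2 := by
  obtain ⟨t, rfl⟩ : ∃ t, n = 2*t+3 := by
    obtain ⟨k, hk⟩ := hodd; exact ⟨k-1, by omega⟩
  clear hn hodd
  have hA' : ∀ i j : Fin (2*t+3), A i j =
      if (i.val+1 = j.val ∨ j.val+1 = i.val ∨ (i.val+1 = 2*t+3 ∧ j.val = 0) ∨
        (j.val+1 = 2*t+3 ∧ i.val = 0)) then 1 else 0 := by
    intro i j
    rw [hA i j]
    exact if_congr (adj_char (by omega) i.isLt j.isLt) rfl rfl
  clear hA
  -- Part 1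
  have part1 : ∀ μ : Finset (Fin (2*t+3)), Odd μ.card → μ.card < 2*t+3 →
      (A.submatrix (fun x : μ => (x : Fin (2*t+3))) (fun x : μ => (x : Fin (2*t+3)))).det = 0 := by
    intro μ hoddc hcard
    obtain ⟨v, hv⟩ : ∃ v : Fin (2*t+3), v ∉ μ := by
      by_contra hc
      push_neg at hc
      have h1 : μ = Finset.univ := Finset.eq_univ_iff_forall.mpr hc
      rw [h1, Finset.card_univ, Fintype.card_fin] at hcard
      omega
    refine det_eq_zero_of_sign _
      (fun x : μ => (-1:ℝ)^(if v.val < (x:Fin (2*t+3)).val then (x:Fin (2*t+3)).val - v.val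
        else (x:Fin (2*t+3)).val + (2*t+3) - v.val)) ?_ ?_ ?_
    · intro x
      rcases Nat.even_or_odd (if v.val < (x:Fin (2*t+3)).val then (x:Fin (2*t+3)).val - v.val
        else (x:Fin (2*t+3)).val + (2*t+3) - v.val) with h'|h'
      · left; exact h'.neg_one_pow
      · right; exact h'.neg_one_pow
    · intro x y hB
      rw [Matrix.submatrix_apply, hA'] at hB
      have hcond : ((x:Fin (2*t+3)).val+1 = (y:Fin (2*t+3)).val ∨
          (y:Fin (2*t+3)).val+1 = (x:Fin (2*t+3)).val ∨
          ((x:Fin (2*t+3)).val+1 = 2*t+3 ∧ (y:Fin (2*t+3)).val = 0) ∨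
          ((y:Fin (2*t+3)).val+1 = 2*t+3 ∧ (x:Fin (2*t+3)).val = 0)) := by
        by_contra hc; rw [if_neg hc] at hB; exact hB rfl
      have hxv : (x:Fin (2*t+3)).val ≠ v.val := by
        intro h
        apply hv
        have h2 : (x : Fin (2*t+3)) = v := Fin.ext h
        rw [← h2]; exact x.2
      have hyv : (y:Fin (2*t+3)).val ≠ v.val := by
        intro h
        apply hv
        have h2 : (y : Fin (2*t+3)) = v := Fin.ext h
        rw [← h2]; exact y.2
      rw [← pow_add]
      refine Odd.neg_one_pow ?_
      rw [Nat.odd_iff]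
      have hx2 := (x:Fin (2*t+3)).isLt
      have hy2 := (y:Fin (2*t+3)).isLt
      have hv2 := v.isLt
      split_ifs <;> omega
    · rw [Fintype.card_coe]; exact hoddc
  refine ⟨part1, ?_, ?_⟩
  · -- Part 2
    intro i
    have hi2 := i.isLt
    set q : Fin (2*t+2) → ℕ := fun k =>
      if i.val+1+k.val < 2*t+3 then i.val+1+k.val else i.val+1+k.val-(2*t+3) with hq
    have hqlt : ∀ k, q k < 2*t+3 := by
      intro k; have := k.isLt; rw [hq]; dsimp only; split_ifs <;> omega
    have hqne : ∀ k, q k ≠ i.val := by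
      intro k; have := k.isLt; rw [hq]; dsimp only; split_ifs <;> omega
    set f : Fin (2*t+2) → {j : Fin (2*t+3) // j ≠ i} :=
      fun k => ⟨⟨q k, hqlt k⟩, fun h => hqne k (by rw [← h])⟩ with hf
    have hinj : Function.Injective f := by
      intro k k' h
      have hval : q k = q k' := by
        have := congrArg (fun z => (z : {j : Fin (2*t+3) // j ≠ i}).1.val) h
        simpa [hf] using this
      have h1 := k.isLt; have h2 := k'.isLt
      rw [hq] at hval; dsimp only at hval
      apply Fin.ext
      split_ifs at hval <;> omega
    have hbij : Function.Bijective f := by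
      rw [Fintype.bijective_iff_injective_and_card]
      refine ⟨hinj, ?_⟩
      rw [Fintype.card_fin, Fintype.card_subtype_compl, Fintype.card_subtype_eq,
        Fintype.card_fin]
      omega
    set e := Equiv.ofBijective f hbij with he
    have hre : ((A.submatrix (fun x : {j : Fin (2*t+3) // j ≠ i} => (x : Fin (2*t+3)))
        (fun x : {j : Fin (2*t+3) // j ≠ i} => (x : Fin (2*t+3)))).submatrix e e)
        = pm (2*t+2) := by
      ext k l
      have hk := k.isLt; have hl := l.isLt
      rw [Matrix.submatrix_apply, Matrix.submatrix_apply, pm_apply]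
      have hek : ((e k : {j : Fin (2*t+3) // j ≠ i}) : Fin (2*t+3)).val = q k := rfl
      have hel : ((e l : {j : Fin (2*t+3) // j ≠ i}) : Fin (2*t+3)).val = q l := rfl
      rw [hA', hek, hel]
      refine if_congr ?_ rfl rfl
      rw [hq]; dsimp only
      split_ifs <;> omega
    have hdet2 : (A.submatrix (fun x : {j : Fin (2*t+3) // j ≠ i} => (x : Fin (2*t+3)))
        (fun x : {j : Fin (2*t+3) // j ≠ i} => (x : Fin (2*t+3)))).det = (-1:ℝ)^(t+1) := by
      rw [← Matrix.det_submatrix_equiv_self e, hre,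
        show 2*t+2 = 2*(t+1) by ring, detpm_even]
    rw [hdet2]
    exact pow_ne_zero _ (by norm_num)
  · -- Part 3
    have hdetA : A.det = 2 := by
      have e1 : A.det = ∑ j : Fin (2*t+3),
          (-1:ℝ) ^ (j : ℕ) * A 0 j * (A.submatrix Fin.succ j.succAbove).det :=
        Matrix.det_succ_row_zero (n := 2*t+2) A
      have hne12 : (⟨1, by omega⟩ : Fin (2*t+3)) ≠ ⟨2*t+2, by omega⟩ := by
        intro h
        have := congrArg Fin.val h
        simp only [Fin.val_mk] at this
        omega
      have hz1 : ∀ x : Fin (2*t+3), x ≠ ⟨1, by omega⟩ → x ≠ ⟨2*t+2, by omega⟩ →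
          (-1:ℝ) ^ (x : ℕ) * A 0 x * (A.submatrix Fin.succ x.succAbove).det = 0 := by
        intro x hx1 hx2
        have hv1 : x.val ≠ 1 := fun h => hx1 (Fin.ext (by simpa [Fin.val_mk] using h))
        have hv2 : x.val ≠ 2*t+2 := fun h => hx2 (Fin.ext (by simpa [Fin.val_mk] using h))
        have hx := x.isLt
        have h0 : A 0 x = 0 := by
          rw [hA', if_neg]
          simp only [Fin.val_zero]
          omega
        rw [h0]; ring
      rw [e1, sum_two _ ⟨1, by omega⟩ ⟨2*t+2, by omega⟩ hne12 hz1]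
      -- entries in row 0
      have hA01 : A 0 (⟨1, by omega⟩ : Fin (2*t+3)) = 1 := by
        rw [hA', if_pos]
        simp
      have hA02 : A 0 (⟨2*t+2, by omega⟩ : Fin (2*t+3)) = 1 := by
        rw [hA', if_pos]
        simp
      -- succAbove value computations
      have hsa1 : ∀ y : Fin (2*t+2),
          (((⟨1, by omega⟩ : Fin (2*t+3)).succAbove y) : ℕ) =
            if (y:ℕ) < 1 then (y:ℕ) else (y:ℕ)+1 := by
        intro y; rw [sv]
      have hsa2 : ∀ y : Fin (2*t+2),
          (((⟨2*t+2, by omega⟩ : Fin (2*t+3)).succAbove y) : ℕ) = (y:ℕ) := by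
        intro y; rw [sv]
        simp only [Fin.val_mk]
        rw [if_pos y.isLt]
      have hsa0 : ∀ y : Fin (2*t+1),
          (((⟨0, by omega⟩ : Fin (2*t+2)).succAbove y) : ℕ) = (y:ℕ)+1 := by
        intro y; rw [sv]
        simp only [Fin.val_mk]
        rw [if_neg (by omega)]
      have hsaL : ∀ y : Fin (2*t+1),
          (((⟨2*t+1, by omega⟩ : Fin (2*t+2)).succAbove y) : ℕ) = (y:ℕ) := by
        intro y; rw [sv]
        simp only [Fin.val_mk]
        rw [if_pos y.isLt]
      -- the two inner column expansions share the same zero-term lemma shape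
      have hzcol : ∀ M : Matrix (Fin (2*t+2)) (Fin (2*t+2)) ℝ,
          (∀ x : Fin (2*t+2), M x 0 = A x.succ 0) →
          ∀ x : Fin (2*t+2), x ≠ ⟨0, by omega⟩ → x ≠ ⟨2*t+1, by omega⟩ →
          (-1:ℝ) ^ (x : ℕ) * M x 0 * ((M.submatrix x.succAbove Fin.succ).det) = 0 := by
        intro M hM x hx1 hx2
        have hv1 : x.val ≠ 0 := fun h => hx1 (Fin.ext (by simpa [Fin.val_mk] using h))
        have hv2 : x.val ≠ 2*t+1 := fun h => hx2 (Fin.ext (by simpa [Fin.val_mk] using h))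
        have hx := x.isLt
        have h0 : M x 0 = 0 := by
          rw [hM, hA', if_neg]
          simp only [Fin.val_zero, Fin.val_succ]
          omega
        rw [h0]; ring
      have hne0L : (⟨0, by omega⟩ : Fin (2*t+2)) ≠ ⟨2*t+1, by omega⟩ := by
        intro h
        have := congrArg Fin.val h
        simp only [Fin.val_mk] at this
        omega
      -- determinant of first minor
      have hM1 : (A.submatrix Fin.succ (⟨1, by omega⟩ : Fin (2*t+3)).succAbove).det = -1 := by
        have e2 : (A.submatrix Fin.succ (⟨1, by omega⟩ : Fin (2*t+3)).succAbove).det =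
            ∑ i : Fin (2*t+2), (-1:ℝ) ^ (i : ℕ) *
              (A.submatrix Fin.succ (⟨1, by omega⟩ : Fin (2*t+3)).succAbove) i 0 *
              (((A.submatrix Fin.succ (⟨1, by omega⟩ : Fin (2*t+3)).succAbove).submatrix
                i.succAbove Fin.succ).det) :=
          Matrix.det_succ_column_zero (n := 2*t+1) _
        have hcol0 : ∀ x : Fin (2*t+2),
            (A.submatrix Fin.succ (⟨1, by omega⟩ : Fin (2*t+3)).succAbove) x 0 = A x.succ 0 := by
          intro x
          rw [Matrix.submatrix_apply]
          congr 1
        rw [e2, sum_two _ ⟨0, by omega⟩ ⟨2*t+1, by omega⟩ hne0L (hzcol _ hcol0)]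
        -- first term: equals pm (2t+1), determinant zero
        have hsub1 : ((A.submatrix Fin.succ (⟨1, by omega⟩ : Fin (2*t+3)).succAbove).submatrix
            (⟨0, by omega⟩ : Fin (2*t+2)).succAbove Fin.succ) = pm (2*t+1) := by
          ext k l
          have hk := k.isLt; have hl := l.isLt
          simp only [Matrix.submatrix_apply, pm_apply]
          rw [hA']
          refine if_congr ?_ rfl rfl
          rw [Fin.val_succ, hsa0, hsa1, Fin.val_succ]
          rw [if_neg (by omega)]
          omega
        -- second term: lower triangular with unit diagonal
        have hsub2 : ((A.submatrix Fin.succ (⟨1, by omega⟩ : Fin (2*t+3)).succAbove).submatrix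
            (⟨2*t+1, by omega⟩ : Fin (2*t+2)).succAbove Fin.succ).det = 1 := by
          set N := ((A.submatrix Fin.succ (⟨1, by omega⟩ : Fin (2*t+3)).succAbove).submatrix
            (⟨2*t+1, by omega⟩ : Fin (2*t+2)).succAbove Fin.succ) with hN
          have hentry : ∀ k l : Fin (2*t+1), N k l =
              if (k:ℕ) = (l:ℕ) ∨ (k:ℕ) = (l:ℕ)+2 then 1 else 0 := by
            intro k l
            have hk := k.isLt; have hl := l.isLt
            rw [hN]
            simp only [Matrix.submatrix_apply]
            rw [hA']
            refine if_congr ?_ rfl rfl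
            rw [Fin.val_succ, hsaL, hsa1, Fin.val_succ]
            rw [if_neg (by omega)]
            omega
          have htri : N.BlockTriangular OrderDual.toDual := by
            intro a b hab
            rw [hentry]
            have : (a:ℕ) < (b:ℕ) := hab
            rw [if_neg (by omega)]
          rw [Matrix.det_of_lowerTriangular N htri]
          refine Finset.prod_eq_one (fun k _ => ?_)
          rw [hentry, if_pos (Or.inl rfl)]
        rw [hsub1, detpm_odd ⟨t, by ring⟩, hsub2]
        have h1 : (A.submatrix Fin.succ (⟨1, by omega⟩ : Fin (2*t+3)).succAbove)
            (⟨2*t+1, by omega⟩ : Fin (2*t+2)) 0 = 1 := by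
          rw [hcol0, hA', if_pos]
          simp
        rw [h1]
        have hodd1 : Odd (2*t+1) := ⟨t, by ring⟩
        show (-1:ℝ) ^ (0:ℕ) * _ * 0 + (-1:ℝ) ^ (2*t+1) * 1 * 1 = -1
        rw [hodd1.neg_one_pow]
        ring
      -- determinant of second minor
      have hM2 : (A.submatrix Fin.succ (⟨2*t+2, by omega⟩ : Fin (2*t+3)).succAbove).det = 1 := by
        have e2 : (A.submatrix Fin.succ (⟨2*t+2, by omega⟩ : Fin (2*t+3)).succAbove).det =
            ∑ i : Fin (2*t+2), (-1:ℝ) ^ (i : ℕ) *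
              (A.submatrix Fin.succ (⟨2*t+2, by omega⟩ : Fin (2*t+3)).succAbove) i 0 *
              (((A.submatrix Fin.succ (⟨2*t+2, by omega⟩ : Fin (2*t+3)).succAbove).submatrix
                i.succAbove Fin.succ).det) :=
          Matrix.det_succ_column_zero (n := 2*t+1) _
        have hcol0 : ∀ x : Fin (2*t+2),
            (A.submatrix Fin.succ (⟨2*t+2, by omega⟩ : Fin (2*t+3)).succAbove) x 0 = A x.succ 0 := by
          intro x
          rw [Matrix.submatrix_apply]
          congr 1
        rw [e2, sum_two _ ⟨0, by omega⟩ ⟨2*t+1, by omega⟩ hne0L (hzcol _ hcol0)]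
        -- first term: upper triangular with unit diagonal
        have hsub1 : ((A.submatrix Fin.succ (⟨2*t+2, by omega⟩ : Fin (2*t+3)).succAbove).submatrix
            (⟨0, by omega⟩ : Fin (2*t+2)).succAbove Fin.succ).det = 1 := by
          set N := ((A.submatrix Fin.succ (⟨2*t+2, by omega⟩ : Fin (2*t+3)).succAbove).submatrix
            (⟨0, by omega⟩ : Fin (2*t+2)).succAbove Fin.succ) with hN
          have hentry : ∀ k l : Fin (2*t+1), N k l =
              if (l:ℕ) = (k:ℕ) ∨ (l:ℕ) = (k:ℕ)+2 then 1 else 0 := by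
            intro k l
            have hk := k.isLt; have hl := l.isLt
            rw [hN]
            simp only [Matrix.submatrix_apply]
            rw [hA']
            refine if_congr ?_ rfl rfl
            rw [Fin.val_succ, hsa0, hsa2, Fin.val_succ]
            omega
          have htri : N.BlockTriangular id := by
            intro a b hab
            rw [hentry]
            have : (b:ℕ) < (a:ℕ) := hab
            rw [if_neg (by omega)]
          rw [Matrix.det_of_upperTriangular htri]
          refine Finset.prod_eq_one (fun k _ => ?_)
          rw [hentry, if_pos (Or.inl rfl)]
        -- second term: equals pm (2t+1), determinant zero
        have hsub2 : ((A.submatrix Fin.succ (⟨2*t+2, by omega⟩ : Fin (2*t+3)).succAbove).submatrix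
            (⟨2*t+1, by omega⟩ : Fin (2*t+2)).succAbove Fin.succ) = pm (2*t+1) := by
          ext k l
          have hk := k.isLt; have hl := l.isLt
          simp only [Matrix.submatrix_apply, pm_apply]
          rw [hA']
          refine if_congr ?_ rfl rfl
          rw [Fin.val_succ, hsaL, hsa2, Fin.val_succ]
          omega
        rw [hsub1, hsub2, detpm_odd ⟨t, by ring⟩]
        have h1 : (A.submatrix Fin.succ (⟨2*t+2, by omega⟩ : Fin (2*t+3)).succAbove)
            (⟨0, by omega⟩ : Fin (2*t+2)) 0 = 1 := by
          rw [hcol0, hA', if_pos]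
          simp
        rw [h1]
        show (-1:ℝ) ^ (0:ℕ) * 1 * 1 + (-1:ℝ) ^ (2*t+1) * _ * 0 = 1
        ring
      rw [hM1, hM2, hA01, hA02]
      have heven1 : Even (2*t+2) := ⟨t+1, by ring⟩
      show (-1:ℝ) ^ (1:ℕ) * 1 * -1 + (-1:ℝ) ^ (2*t+2) * 1 * 1 = 2
      rw [heven1.neg_one_pow]
      norm_num
    constructor
    · rw [hdetA]; norm_num
    · rw [hdetA]; norm_num
end

section
/- Let n ≥ 2 and let A be a symmetric nonsingular n×n 0–1 matrix such that A⁻¹ is equimodular with constant diagonal, i.e., A⁻¹ ∈ {−α,α}^{n×n} with all diagonal entries of A⁻¹ equal. Then all principal minors of A of order n−2 are zero, i.e., det(A(μ)) = 0 for every μ ⊆ [n] with |μ| = 2. -/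
/-!
By Jacobi's complementary minor identity, the principal minor of `A` on a set `s` equals
`det A` times the principal minor of `A⁻¹` on the complement of `s`. For `|s| = n - 2` the
latter is a `2 × 2` principal minor `d² - b²` of the symmetric matrix `A⁻¹`, where `d` and `b`
are both `±α`, so it vanishes.
-/

open Matrix

namespace Matrix

variable {m p ι R : Type*} [Fintype m] [Fintype p] [Fintype ι]
  [DecidableEq m] [DecidableEq p] [DecidableEq ι] [CommRing R]

theorem det_toBlocks₁₁_eq_det_mul_det_inv_toBlocks₂₂ (M : Matrix (m ⊕ p) (m ⊕ p) R)
    (hM : IsUnit M.det) : M.toBlocks₁₁.det = M.det * M⁻¹.toBlocks₂₂.det := by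
  set N := M⁻¹
  have hMN : fromBlocks M.toBlocks₁₁ M.toBlocks₁₂ M.toBlocks₂₁ M.toBlocks₂₂ *
      fromBlocks N.toBlocks₁₁ N.toBlocks₁₂ N.toBlocks₂₁ N.toBlocks₂₂ =
        fromBlocks 1 0 0 1 := by
    rw [fromBlocks_toBlocks, fromBlocks_toBlocks, fromBlocks_one]
    exact mul_nonsing_inv M hM
  rw [fromBlocks_multiply] at hMN
  obtain ⟨-, h₁₂, -, h₂₂⟩ := fromBlocks_inj.mp hMN
  -- Multiplying by the right block-triangular factor clears the upper right block of `M`.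
  have key : M * fromBlocks 1 N.toBlocks₁₂ 0 N.toBlocks₂₂ =
      fromBlocks M.toBlocks₁₁ 0 M.toBlocks₂₁ 1 := by
    rw [← fromBlocks_toBlocks M, fromBlocks_multiply, h₁₂, h₂₂]
    simp
  simpa [det_fromBlocks_zero₂₁, det_fromBlocks_zero₁₂] using (congrArg det key).symm

theorem det_submatrix_coe_eq_det_mul_det_inv_submatrix_compl (A : Matrix ι ι R)
    (hA : IsUnit A.det) (s : Finset ι) :
    (A.submatrix ((↑) : s → ι) (↑)).det =
      A.det * (A⁻¹.submatrix ((↑) : {i // i ∉ s} → ι) (↑)).det := by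
  let e := Equiv.sumCompl (· ∈ s)
  have h := det_toBlocks₁₁_eq_det_mul_det_inv_toBlocks₂₂ (A.submatrix e e)
    (by rwa [det_submatrix_equiv_self])
  rwa [inv_submatrix_equiv, det_submatrix_equiv_self] at h

theorem det_eq_zero_of_card_eq_two_of_isSymm {κ : Type*} [Fintype κ] [DecidableEq κ]
    (B : Matrix κ κ R) (hκ : Fintype.card κ = 2) (hB : B.IsSymm) (α : R)
    (hpm : ∀ i j, B i j = α ∨ B i j = -α) (hdiag : ∀ i j, B i i = B j j) : B.det = 0 := by
  have hsq : ∀ i j, B i j ^ 2 = α ^ 2 := fun i j => by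
    rcases hpm i j with h | h <;> simp [h]
  obtain ⟨f⟩ := Fintype.truncEquivFinOfCardEq hκ
  rw [← det_submatrix_equiv_self f.symm, det_fin_two]
  simp only [submatrix_apply, hB.apply (f.symm 0) (f.symm 1), ← hdiag (f.symm 0) (f.symm 1)]
  linear_combination hsq (f.symm 0) (f.symm 0) - hsq (f.symm 0) (f.symm 1)

end Matrix

theorem stmt19_general {n : ℕ} (hn : 2 ≤ n) (A : Matrix (Fin n) (Fin n) ℝ)
    (hsym : A.IsSymm) (hA : IsUnit A.det)
    (α : ℝ) (hequi : ∀ i j, A⁻¹ i j = α ∨ A⁻¹ i j = -α)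
    (hconst : ∀ i j, A⁻¹ i i = A⁻¹ j j) :
    ∀ μ : Finset (Fin n), μ.card = n - 2 →
      (A.submatrix (fun x : μ => (x : Fin n)) (fun x : μ => (x : Fin n))).det = 0 := by
  intro μ hμ
  have hcard : Fintype.card {i // i ∉ μ} = 2 := by
    rw [Fintype.card_subtype_compl, Fintype.card_coe, hμ, Fintype.card_fin]
    omega
  rw [det_submatrix_coe_eq_det_mul_det_inv_submatrix_compl A hA μ,
    det_eq_zero_of_card_eq_two_of_isSymm _ hcard (hsym.inv.submatrix _) α
      (fun i j => hequi i j) (fun i j => hconst i j), mul_zero]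

theorem stmt19 {n : ℕ} (hn : 2 ≤ n) (A : Matrix (Fin n) (Fin n) ℝ)
    (hsym : A.IsSymm) (hA : IsUnit A.det)
    (h01 : ∀ i j, A i j = 0 ∨ A i j = 1)
    (α : ℝ) (hequi : ∀ i j, A⁻¹ i j = α ∨ A⁻¹ i j = -α)
    (hconst : ∀ i j, A⁻¹ i i = A⁻¹ j j) :
    ∀ μ : Finset (Fin n), μ.card = n - 2 →
      (A.submatrix (fun x : μ => (x : Fin n)) (fun x : μ => (x : Fin n))).det = 0 :=
  stmt19_general hn A hsym hA α hequi hconst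
end
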